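/- arXiv:1109.1806 — 4 statements merged into one kernel-verified Lean document; each statement's English description precedes it below -/
import Mathlib

section
/- Let s = (s_i)_{i≥0} be a non-decreasing sequence of positive integers and let S be a step set that contains every horizontal step (a,0) with a ≥ 1 and satisfies the slope condition for s, i.e. for every (a,b) ∈ S with b > 0, every i ≥ 0 and every j with 1 ≤ j ≤ b one has b·(s_{i+j} − s_i + 1) > j·a. For m ≥ 0 let p_m be the number of S-paths from (0,0) to (s_m − 1, m) with boundary s, and let ℓ_m be the number of S-paths from (0,0) to (s_m − 1, m) with boundary s whose last step is horizontal (of the form (a,0) with a ≥ 1). Then for every n ≥ 1: a_{s_n−1,n} = p_n + Σ_{m=0}^{n−1} (p_m + ℓ_m) · Σ_{j=0}^{s_n−s_m−1} a_{j,n−m}. -/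
/-- x-coordinate of the `j`-th node of the path `p` (partial sum of first coordinates). -/
def xPart (p : List (ℕ × ℕ)) (j : ℕ) : ℕ := ((p.take j).map Prod.fst).sum

/-- y-coordinate of the `j`-th node of the path `p` (partial sum of second coordinates). -/
def yPart (p : List (ℕ × ℕ)) (j : ℕ) : ℕ := ((p.take j).map Prod.snd).sum

/-- `p` is an `S`-path from `(0,0)` to `(n,m)`. -/
def IsPath (S : Set (ℕ × ℕ)) (n m : ℕ) (p : List (ℕ × ℕ)) : Prop :=
  (∀ st ∈ p, st ∈ S) ∧ xPart p p.length = n ∧ yPart p p.length = m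

/-- `p` has (right) boundary `s`: every node `(x, i)` satisfies `x < s i`. -/
def HasBoundary (s : ℕ → ℕ) (p : List (ℕ × ℕ)) : Prop :=
  ∀ j ≤ p.length, xPart p j < s (yPart p j)

/-- The number of `S`-paths from `(0,0)` to `(n,m)`. -/
noncomputable def aCount (S : Set (ℕ × ℕ)) (n m : ℕ) : ℕ :=
  Set.ncard {p : List (ℕ × ℕ) | IsPath S n m p}

/-! A path to `(s n - 1, n)` that violates the boundary leaves the region `x < s i` for the
first time by some step after a bounded prefix `q`; by the slope condition that step is
horizontal. Cutting there writes the path uniquely as `q`, ending at a height `m < n` at an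
abscissa `< s m`, then a horizontal step, then an arbitrary path of height `n - m` and width
`< s n - s m`. The bounded prefixes ending at height `m` are counted by `p_m` (those ending at
`s m - 1`) plus `ℓ_m` (the others, completed by one horizontal step). -/

def xEnd (p : List (ℕ × ℕ)) : ℕ := (p.map Prod.fst).sum

def yEnd (p : List (ℕ × ℕ)) : ℕ := (p.map Prod.snd).sum

@[simp] lemma xEnd_nil : xEnd [] = 0 := rfl

@[simp] lemma yEnd_nil : yEnd [] = 0 := rfl

@[simp] lemma xEnd_cons (st : ℕ × ℕ) (p : List (ℕ × ℕ)) : xEnd (st :: p) = st.1 + xEnd p := rfl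

@[simp] lemma yEnd_cons (st : ℕ × ℕ) (p : List (ℕ × ℕ)) : yEnd (st :: p) = st.2 + yEnd p := rfl

@[simp] lemma xEnd_append (p q : List (ℕ × ℕ)) : xEnd (p ++ q) = xEnd p + xEnd q := by
  simp [xEnd]

@[simp] lemma yEnd_append (p q : List (ℕ × ℕ)) : yEnd (p ++ q) = yEnd p + yEnd q := by
  simp [yEnd]

lemma isPath_iff {S : Set (ℕ × ℕ)} {a b : ℕ} {p : List (ℕ × ℕ)} :
    IsPath S a b p ↔ (∀ st ∈ p, st ∈ S) ∧ xEnd p = a ∧ yEnd p = b := by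
  simp [IsPath, xPart, yPart, xEnd, yEnd]

lemma length_le_xEnd_add_yEnd {p : List (ℕ × ℕ)} (h : ∀ st ∈ p, st ≠ (0, 0)) :
    p.length ≤ xEnd p + yEnd p := by
  induction p with
  | nil => simp
  | cons st p ih =>
    have hst : st ≠ (0, 0) := h st List.mem_cons_self
    have := ih fun st' h' => h st' (List.mem_cons_of_mem _ h')
    have : st.1 ≠ 0 ∨ st.2 ≠ 0 := by
      by_contra! h0
      exact hst (Prod.ext h0.1 h0.2)
    simp only [List.length_cons, xEnd_cons, yEnd_cons]
    omega

lemma List.finite_setOf_length_le_forall_mem {α : Type*} {T : Set α} (hT : T.Finite) (K : ℕ) :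
    {l : List α | l.length ≤ K ∧ ∀ x ∈ l, x ∈ T}.Finite := by
  have := hT.to_subtype
  refine ((List.finite_length_le T K).image (List.map Subtype.val)).subset ?_
  rintro l ⟨hlen, hmem⟩
  exact ⟨l.attachWith T hmem, (List.length_attachWith ..).trans_le hlen,
    List.attachWith_map_subtype_val hmem⟩

lemma finite_setOf_xEnd_le_yEnd_le {S : Set (ℕ × ℕ)} (h00 : (0, 0) ∉ S) (N M : ℕ) :
    {p : List (ℕ × ℕ) | (∀ st ∈ p, st ∈ S) ∧ xEnd p ≤ N ∧ yEnd p ≤ M}.Finite := by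
  refine (List.finite_setOf_length_le_forall_mem (Set.finite_Iic (N, M)) (N + M)).subset ?_
  rintro p ⟨hS, hx, hy⟩
  have hlen := length_le_xEnd_add_yEnd fun st hst h0 => h00 (h0 ▸ hS st hst)
  refine ⟨by omega, fun st hst => ⟨?_, ?_⟩⟩
  · exact (List.le_sum_of_mem (List.mem_map_of_mem hst)).trans hx
  · exact (List.le_sum_of_mem (List.mem_map_of_mem hst)).trans hy

lemma finite_setOf_isPath {S : Set (ℕ × ℕ)} (h00 : (0, 0) ∉ S) (a b : ℕ) :
    {p : List (ℕ × ℕ) | IsPath S a b p}.Finite :=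
  (finite_setOf_xEnd_le_yEnd_le h00 a b).subset fun _ hp =>
    let ⟨hS, hx, hy⟩ := isPath_iff.1 hp
    ⟨hS, hx.le, hy.le⟩

lemma Finset.set_ncard_biUnion {ι α : Type*} {t : Finset ι} {f : ι → Set α}
    (hf : ∀ i ∈ t, (f i).Finite) (hd : (t : Set ι).PairwiseDisjoint f) :
    (⋃ i ∈ t, f i).ncard = ∑ i ∈ t, (f i).ncard := by
  rw [← finsum_mem_coe_finset, ← t.finite_toSet.ncard_biUnion hf hd]
  simp

section Boundary

variable {s : ℕ → ℕ}

lemma HasBoundary.xEnd_lt {p : List (ℕ × ℕ)} (h : HasBoundary s p) : xEnd p < s (yEnd p) := by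
  simpa [xPart, yPart, xEnd, yEnd] using h p.length le_rfl

lemma HasBoundary.of_append {p q : List (ℕ × ℕ)} (h : HasBoundary s (p ++ q)) :
    HasBoundary s p := by
  intro j hj
  simpa [xPart, yPart, List.take_append_of_le_length hj] using h j (by simp; omega)

lemma hasBoundary_nil : HasBoundary s [] ↔ 0 < s 0 := by
  simp [HasBoundary, xPart, yPart]

lemma hasBoundary_concat {p : List (ℕ × ℕ)} {st : ℕ × ℕ} :
    HasBoundary s (p ++ [st]) ↔ HasBoundary s p ∧ xEnd p + st.1 < s (yEnd p + st.2) := by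
  refine ⟨fun h => ⟨h.of_append, by simpa using h.xEnd_lt⟩, ?_⟩
  rintro ⟨hp, hst⟩ j hj
  rcases Nat.lt_or_ge j (p.length + 1) with hj' | hj'
  · simpa [xPart, yPart, List.take_append_of_le_length (Nat.le_of_lt_succ hj')] using
      hp j (by omega)
  · obtain rfl : j = p.length + 1 := by simp at hj; omega
    simpa [xPart, yPart, xEnd, yEnd] using hst

def ExitsAt (s : ℕ → ℕ) (q : List (ℕ × ℕ)) (st : ℕ × ℕ) : Prop :=
  HasBoundary s q ∧ ¬ HasBoundary s (q ++ [st])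

lemma exitsAt_iff {q : List (ℕ × ℕ)} {st : ℕ × ℕ} :
    ExitsAt s q st ↔ HasBoundary s q ∧ s (yEnd q + st.2) ≤ xEnd q + st.1 := by
  simp only [ExitsAt, hasBoundary_concat, not_and, not_lt]
  tauto

lemma ExitsAt.not_hasBoundary {q : List (ℕ × ℕ)} {st : ℕ × ℕ} (h : ExitsAt s q st)
    (r : List (ℕ × ℕ)) : ¬ HasBoundary s (q ++ st :: r) := fun hB =>
  h.2 (HasBoundary.of_append (q := r) (by simpa using hB))

lemma exists_exitsAt_of_not_hasBoundary (h0 : 0 < s 0) {P : List (ℕ × ℕ)}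
    (hP : ¬ HasBoundary s P) : ∃ q st r, P = q ++ st :: r ∧ ExitsAt s q st := by
  induction P using List.reverseRecOn with
  | nil => exact absurd (hasBoundary_nil.2 h0) hP
  | append_singleton P st ih =>
    by_cases hB : HasBoundary s P
    · exact ⟨P, st, [], rfl, hB, hP⟩
    · obtain ⟨q, st', r, rfl, hq⟩ := ih hB
      exact ⟨q, st', r ++ [st], by simp, hq⟩

lemma ExitsAt.eq_of_append_cons_eq {q q' r r' : List (ℕ × ℕ)} {st st' : ℕ × ℕ}
    (h : ExitsAt s q st) (h' : ExitsAt s q' st') (heq : q ++ st :: r = q' ++ st' :: r') :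
    q = q' ∧ st = st' ∧ r = r' := by
  rcases List.append_eq_append_iff.1 heq with ⟨_ | ⟨x, t⟩, rfl, ht⟩ | ⟨_ | ⟨x, t⟩, rfl, ht⟩
  · simp_all
  · obtain ⟨rfl, -⟩ := List.cons_eq_cons.1 ht
    exact absurd h'.1 (h.not_hasBoundary t)
  · simp_all
  · obtain ⟨rfl, -⟩ := List.cons_eq_cons.1 ht
    exact absurd h.1 (h'.not_hasBoundary t)

lemma ExitsAt.snd_eq_zero (hmono : Monotone s) {S : Set (ℕ × ℕ)}
    (hslope : ∀ a b : ℕ, (a, b) ∈ S → 0 < b →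
      ∀ i j : ℕ, 1 ≤ j → j ≤ b → j * a < b * (s (i + j) - s i + 1))
    {q : List (ℕ × ℕ)} {st : ℕ × ℕ} (h : ExitsAt s q st) (hst : st ∈ S) : st.2 = 0 := by
  obtain ⟨hq, hexit⟩ := exitsAt_iff.1 h
  by_contra! hb
  -- the case `j = b` of the slope condition: `a ≤ s (i + b) - s i`
  have hlt := Nat.lt_of_mul_lt_mul_left
    (hslope st.1 st.2 hst (Nat.pos_of_ne_zero hb) (yEnd q) st.2 (Nat.pos_of_ne_zero hb) le_rfl)
  have := hmono (Nat.le_add_right (yEnd q) st.2)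
  have := hq.xEnd_lt
  omega

end Boundary

section Counting

variable {S : Set (ℕ × ℕ)} {s : ℕ → ℕ}

def boundedPathsTo (S : Set (ℕ × ℕ)) (s : ℕ → ℕ) (m : ℕ) : Set (List (ℕ × ℕ)) :=
  {q | (∀ st ∈ q, st ∈ S) ∧ HasBoundary s q ∧ yEnd q = m}

def narrowPaths (S : Set (ℕ × ℕ)) (w h : ℕ) : Set (List (ℕ × ℕ)) :=
  {r | (∀ st ∈ r, st ∈ S) ∧ xEnd r < w ∧ yEnd r = h}

lemma finite_boundedPathsTo (h00 : (0, 0) ∉ S) (m : ℕ) : (boundedPathsTo S s m).Finite :=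
  (finite_setOf_xEnd_le_yEnd_le h00 (s m) m).subset fun _ ⟨hS, hB, hy⟩ =>
    ⟨hS, (hy ▸ hB.xEnd_lt).le, hy.le⟩

lemma finite_narrowPaths (h00 : (0, 0) ∉ S) (w h : ℕ) : (narrowPaths S w h).Finite :=
  (finite_setOf_xEnd_le_yEnd_le h00 w h).subset fun _ ⟨hS, hx, hy⟩ => ⟨hS, hx.le, hy.le⟩

lemma ncard_narrowPaths (h00 : (0, 0) ∉ S) (w h : ℕ) :
    (narrowPaths S w h).ncard = ∑ j ∈ Finset.range w, aCount S j h := by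
  have hunion : narrowPaths S w h = ⋃ j ∈ Finset.range w, {r | IsPath S j h r} := by
    ext r
    simp only [narrowPaths, isPath_iff, Set.mem_ofPred_eq, Set.mem_iUnion, Finset.mem_range,
      exists_prop]
    exact ⟨fun ⟨hS, hx, hy⟩ => ⟨_, hx, hS, rfl, hy⟩, fun ⟨_, hj, hS, hx, hy⟩ => ⟨hS, hx ▸ hj, hy⟩⟩
  rw [hunion, Finset.set_ncard_biUnion (fun j _ => finite_setOf_isPath h00 j h)]
  · rfl
  · intro i _ j _ hij
    exact Set.disjoint_left.2 fun r hi hj =>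
      hij ((isPath_iff.1 hi).2.1.symm.trans (isPath_iff.1 hj).2.1)

lemma ncard_boundedPathsTo_of_xEnd_lt (hhoriz : ∀ a : ℕ, 1 ≤ a → (a, 0) ∈ S) (m : ℕ) :
    {q ∈ boundedPathsTo S s m | xEnd q < s m - 1}.ncard =
      {p : List (ℕ × ℕ) | IsPath S (s m - 1) m p ∧ HasBoundary s p ∧
        ∃ a : ℕ, 1 ≤ a ∧ p.getLast? = some (a, 0)}.ncard := by
  have hinj : Set.InjOn (fun q => q ++ [(s m - 1 - xEnd q, 0)])
      {q ∈ boundedPathsTo S s m | xEnd q < s m - 1} :=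
    fun q _ q' _ h => by simpa using congrArg List.dropLast h
  rw [← hinj.ncard_image]
  congr 1
  ext p
  constructor
  · rintro ⟨q, ⟨⟨hS, hB, rfl⟩, hlt⟩, rfl⟩
    refine ⟨isPath_iff.2 ⟨?_, by simp; omega, by simp⟩,
      hasBoundary_concat.2 ⟨hB, by simp; omega⟩, _, by omega, List.getLast?_concat⟩
    simp only [List.mem_append, List.mem_singleton]
    rintro st (hst | rfl)
    exacts [hS st hst, hhoriz _ (by omega)]
  · rintro ⟨hP, hB, a, ha, hp⟩
    obtain ⟨q, rfl⟩ := List.getLast?_eq_some_iff.1 hp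
    obtain ⟨hS, hx, hy⟩ := isPath_iff.1 hP
    simp only [xEnd_append, yEnd_append, xEnd_cons, yEnd_cons, xEnd_nil, yEnd_nil] at hx hy
    refine ⟨q, ⟨⟨fun st hst => hS st (by simp [hst]), hB.of_append, by omega⟩, by omega⟩, ?_⟩
    simp only [List.append_cancel_left_eq, List.cons.injEq, Prod.mk.injEq, and_true]
    omega

lemma ncard_boundedPathsTo (h00 : (0, 0) ∉ S) (hhoriz : ∀ a : ℕ, 1 ≤ a → (a, 0) ∈ S) (m : ℕ) :
    (boundedPathsTo S s m).ncard =
      {p : List (ℕ × ℕ) | IsPath S (s m - 1) m p ∧ HasBoundary s p}.ncard +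
      {p : List (ℕ × ℕ) | IsPath S (s m - 1) m p ∧ HasBoundary s p ∧
        ∃ a : ℕ, 1 ≤ a ∧ p.getLast? = some (a, 0)}.ncard := by
  set B := boundedPathsTo S s m
  have hsplit : B = {q ∈ B | xEnd q = s m - 1} ∪ {q ∈ B | xEnd q < s m - 1} := by
    ext q
    refine ⟨fun hq => ?_, fun hq => hq.elim (·.1) (·.1)⟩
    have := hq.2.2 ▸ hq.2.1.xEnd_lt
    by_cases h : xEnd q = s m - 1
    exacts [Or.inl ⟨hq, h⟩, Or.inr ⟨hq, by omega⟩]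
  have hfull : {q ∈ B | xEnd q = s m - 1} =
      {p : List (ℕ × ℕ) | IsPath S (s m - 1) m p ∧ HasBoundary s p} := by
    ext q
    simp only [B, boundedPathsTo, isPath_iff, Set.mem_ofPred_eq]
    tauto
  have hfin := finite_boundedPathsTo (s := s) h00 m
  rw [hsplit, Set.ncard_union_eq _ (hfin.subset (fun _ h => h.1)) (hfin.subset (fun _ h => h.1)),
    hfull, ncard_boundedPathsTo_of_xEnd_lt hhoriz]
  exact Set.disjoint_left.2 fun _ h h' => lt_irrefl _ (h.2 ▸ h'.2)

end Counting

section Gluing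

variable {S : Set (ℕ × ℕ)} {s : ℕ → ℕ} {n : ℕ}

/-- Joins `q` and `r` by the horizontal step that makes the result end at abscissa `N`. -/
def glue (N : ℕ) (qr : List (ℕ × ℕ) × List (ℕ × ℕ)) : List (ℕ × ℕ) :=
  qr.1 ++ (N - xEnd qr.2 - xEnd qr.1, 0) :: qr.2

/-- The pairs `(q, r)` that `glue (s n - 1)` turns into the paths to `(s n - 1, n)` violating `s`:
`q` is the part before the first exit, ending at height `m < n`. -/
def gluingDomain (S : Set (ℕ × ℕ)) (s : ℕ → ℕ) (n : ℕ) :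
    Set (List (ℕ × ℕ) × List (ℕ × ℕ)) :=
  ⋃ m ∈ Finset.range n, boundedPathsTo S s m ×ˢ narrowPaths S (s n - s m) (n - m)

lemma mem_gluingDomain {q r : List (ℕ × ℕ)} :
    (q, r) ∈ gluingDomain S s n ↔ yEnd q < n ∧ q ∈ boundedPathsTo S s (yEnd q) ∧
      r ∈ narrowPaths S (s n - s (yEnd q)) (n - yEnd q) := by
  simp only [gluingDomain, Set.mem_iUnion, Set.mem_prod, Finset.mem_range, exists_prop]
  constructor
  · rintro ⟨m, hm, hq, hr⟩
    obtain rfl : yEnd q = m := hq.2.2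
    exact ⟨hm, hq, hr⟩
  · exact fun h => ⟨_, h⟩

lemma exitsAt_of_mem_gluingDomain (hmono : Monotone s) {q r : List (ℕ × ℕ)}
    (hqr : (q, r) ∈ gluingDomain S s n) :
    ExitsAt s q (s n - 1 - xEnd r - xEnd q, 0) := by
  obtain ⟨hn, ⟨-, hB, -⟩, -, hr, -⟩ := mem_gluingDomain.1 hqr
  have := hB.xEnd_lt
  have := hmono hn.le
  exact exitsAt_iff.2 ⟨hB, by simp only [add_zero]; omega⟩

lemma injOn_glue (hmono : Monotone s) : Set.InjOn (glue (s n - 1)) (gluingDomain S s n) := by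
  rintro ⟨q, r⟩ hqr ⟨q', r'⟩ hqr' h
  obtain ⟨rfl, -, rfl⟩ := (exitsAt_of_mem_gluingDomain hmono hqr).eq_of_append_cons_eq
    (exitsAt_of_mem_gluingDomain hmono hqr') h
  rfl

lemma ncard_gluingDomain (h00 : (0, 0) ∉ S) :
    (gluingDomain S s n).ncard = ∑ m ∈ Finset.range n,
      (boundedPathsTo S s m).ncard * (narrowPaths S (s n - s m) (n - m)).ncard := by
  rw [gluingDomain, Finset.set_ncard_biUnion]
  · simp only [Set.ncard_prod]
  · exact fun m _ => (finite_boundedPathsTo h00 m).prod (finite_narrowPaths h00 _ _)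
  · intro m _ m' _ hm
    exact Set.disjoint_prod.2 <| Or.inl <| Set.disjoint_left.2 fun q hq hq' =>
      hm (hq.2.2.symm.trans hq'.2.2)

lemma image_glue_gluingDomain (hmono : Monotone s) (hpos : ∀ i, 0 < s i)
    (hhoriz : ∀ a : ℕ, 1 ≤ a → (a, 0) ∈ S)
    (hslope : ∀ a b : ℕ, (a, b) ∈ S → 0 < b →
      ∀ i j : ℕ, 1 ≤ j → j ≤ b → j * a < b * (s (i + j) - s i + 1)) :
    glue (s n - 1) '' gluingDomain S s n =
      {P | IsPath S (s n - 1) n P} \ {P | HasBoundary s P} := by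
  ext P
  constructor
  · rintro ⟨⟨q, r⟩, hqr, rfl⟩
    have hexit := exitsAt_of_mem_gluingDomain hmono hqr
    obtain ⟨hn, ⟨hqS, hB, -⟩, hrS, hr, hry⟩ := mem_gluingDomain.1 hqr
    have := hB.xEnd_lt
    have := hmono hn.le
    refine ⟨isPath_iff.2 ⟨?_, by simp [glue]; omega, by simp [glue]; omega⟩,
      hexit.not_hasBoundary r⟩
    simp only [glue, List.mem_append, List.mem_cons]
    rintro st (hst | rfl | hst)
    exacts [hqS st hst, hhoriz _ (by omega), hrS st hst]
  · rintro ⟨hP, hnB⟩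
    obtain ⟨q, ⟨a, b⟩, r, rfl, hexit⟩ := exists_exitsAt_of_not_hasBoundary (hpos 0) hnB
    obtain ⟨hS, hx, hy⟩ := isPath_iff.1 hP
    have hst : (a, b) ∈ S := hS _ (by simp)
    obtain rfl : b = 0 := hexit.snd_eq_zero hmono hslope hst
    obtain ⟨hB, hle⟩ := exitsAt_iff.1 hexit
    simp only [xEnd_append, yEnd_append, xEnd_cons, yEnd_cons, add_zero] at hx hy hle
    have := hB.xEnd_lt
    have := hpos n
    -- the exit happens below height `n`, since the endpoint `(s n - 1, n)` lies inside
    have hn : yEnd q < n := by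
      by_contra! h
      obtain rfl : yEnd q = n := by omega
      omega
    have := hmono hn.le
    refine ⟨(q, r), mem_gluingDomain.2 ⟨hn, ⟨fun st h => hS st (by simp [h]), hB, rfl⟩,
      ⟨fun st h => hS st (by simp [h]), by omega, by omega⟩⟩, ?_⟩
    simp only [glue, List.append_cancel_left_eq, List.cons.injEq, Prod.mk.injEq, and_true]
    omega

end Gluing

theorem stmt0_general (s : ℕ → ℕ) (hmono : Monotone s) (hpos : ∀ i, 0 < s i)
    (S : Set (ℕ × ℕ)) (h00 : (0, 0) ∉ S)
    (hhoriz : ∀ a : ℕ, 1 ≤ a → (a, 0) ∈ S)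
    (hslope : ∀ a b : ℕ, (a, b) ∈ S → 0 < b →
      ∀ i j : ℕ, 1 ≤ j → j ≤ b → j * a < b * (s (i + j) - s i + 1))
    (pB ℓ : ℕ → ℕ)
    (hp : ∀ m, pB m =
      Set.ncard {p : List (ℕ × ℕ) | IsPath S (s m - 1) m p ∧ HasBoundary s p})
    (hℓ : ∀ m, ℓ m =
      Set.ncard {p : List (ℕ × ℕ) | IsPath S (s m - 1) m p ∧ HasBoundary s p ∧
        ∃ a : ℕ, 1 ≤ a ∧ p.getLast? = some (a, 0)})
    (n : ℕ) :
    aCount S (s n - 1) n =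
      pB n + ∑ m ∈ Finset.range n,
        (pB m + ℓ m) * ∑ j ∈ Finset.range (s n - s m), aCount S j (n - m) := by
  rw [aCount, ← Set.ncard_inter_add_ncard_sdiff_eq_ncard _ {P | HasBoundary s P}
      (finite_setOf_isPath h00 _ _),
    ← image_glue_gluingDomain hmono hpos hhoriz hslope, (injOn_glue hmono).ncard_image,
    ncard_gluingDomain h00, hp n]
  refine congrArg _ (Finset.sum_congr rfl fun m _ => ?_)
  rw [ncard_boundedPathsTo h00 hhoriz, ncard_narrowPaths h00, hp, hℓ]

theorem stmt0 (s : ℕ → ℕ) (hmono : Monotone s) (hpos : ∀ i, 0 < s i)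
    (S : Set (ℕ × ℕ)) (h00 : (0, 0) ∉ S)
    (hhoriz : ∀ a : ℕ, 1 ≤ a → (a, 0) ∈ S)
    (hslope : ∀ a b : ℕ, (a, b) ∈ S → 0 < b →
      ∀ i j : ℕ, 1 ≤ j → j ≤ b → j * a < b * (s (i + j) - s i + 1))
    (pB ℓ : ℕ → ℕ)
    (hp : ∀ m, pB m =
      Set.ncard {p : List (ℕ × ℕ) | IsPath S (s m - 1) m p ∧ HasBoundary s p})
    (hℓ : ∀ m, ℓ m =
      Set.ncard {p : List (ℕ × ℕ) | IsPath S (s m - 1) m p ∧ HasBoundary s p ∧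
        ∃ a : ℕ, 1 ≤ a ∧ p.getLast? = some (a, 0)})
    (n : ℕ) (hn : 1 ≤ n) :
    aCount S (s n - 1) n =
      pB n + ∑ m ∈ Finset.range n,
        (pB m + ℓ m) * ∑ j ∈ Finset.range (s n - s m), aCount S j (n - m) :=
  stmt0_general s hmono hpos S h00 hhoriz hslope pB ℓ hp hℓ n
end

section
/- Let S be a step set that contains every horizontal step (a,0) with a ≥ 1 and such that every (a,b) ∈ S with b > 0 satisfies a ≤ b (the slope condition for the Catalan boundary (i+1)). Let P(t) = Σ_{n≥0} p_n tⁿ, let T(t) = Σ_{a≥1, (a,a)∈S} tᵃ, let E_0(t) be the formal power series whose coefficient of tⁿ is Σ_{j=0}^{n} a_{j,n}, and let E_1(t) be the formal power series whose coefficient of tⁿ is Σ_{j=0}^{n−1} a_{j,n} (so E_1 has zero constant term). Then in ℚ⟦t⟧: P(t) · (1 + (2 − T(t)) · E_1(t)) = E_0(t). -/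
/-- `p` is Catalan: every node `(x, y)` satisfies `x ≤ y`. -/
def IsCatalan (p : List (ℕ × ℕ)) : Prop :=
  ∀ j ≤ p.length, xPart p j ≤ yPart p j

/-- The number of Catalan `S`-paths from `(0,0)` to `(n,n)`. -/
noncomputable def pCatalan (S : Set (ℕ × ℕ)) (n : ℕ) : ℕ :=
  Set.ncard {p : List (ℕ × ℕ) | IsPath S n n p ∧ IsCatalan p}

open PowerSeries

section WeightGF

variable {α β γ : Type*}

lemma Set.ncard_eq_sum_ncard_inter_preimage {s : Set α} (hs : s.Finite) (f : α → β)
    {t : Finset β} (hf : ∀ a ∈ s, f a ∈ t) :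
    s.ncard = ∑ b ∈ t, (s ∩ f ⁻¹' {b}).ncard := by
  classical
  rw [Set.ncard_eq_toFinset_card s hs,
    Finset.card_eq_sum_card_fiberwise (fun a ha => hf a (hs.mem_toFinset.1 ha))]
  refine Finset.sum_congr rfl fun b _ => ?_
  rw [← Set.ncard_coe_finset]
  congr 1
  ext a
  simp

variable (R : Type*) [CommSemiring R]

/-- Meaningful only when all fibres `s ∩ w ⁻¹' {n}` are finite: `Set.ncard` is `0` on infinite
sets. -/
noncomputable def weightGF (w : α → ℕ) (s : Set α) : R⟦X⟧ :=
  mk fun n => ((s ∩ w ⁻¹' {n}).ncard : R)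

variable {R} {w : α → ℕ} {v : β → ℕ} {s t : Set α}

@[simp]
lemma coeff_weightGF (n : ℕ) : coeff n (weightGF R w s) = ((s ∩ w ⁻¹' {n}).ncard : R) :=
  coeff_mk _ _

lemma weightGF_union (hs : ∀ n, (s ∩ w ⁻¹' {n}).Finite) (ht : ∀ n, (t ∩ w ⁻¹' {n}).Finite)
    (hst : Disjoint s t) : weightGF R w (s ∪ t) = weightGF R w s + weightGF R w t := by
  ext n
  rw [map_add, coeff_weightGF, coeff_weightGF, coeff_weightGF, Set.union_inter_distrib_right,
    Set.ncard_union_eq (hst.mono Set.inter_subset_left Set.inter_subset_left) (hs n) (ht n),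
    Nat.cast_add]

lemma weightGF_image {f : α → β} (hf : Set.InjOn f s) (hw : ∀ a ∈ s, v (f a) = w a) :
    weightGF R v (f '' s) = weightGF R w s := by
  ext n
  rw [coeff_weightGF, coeff_weightGF, ← (hf.mono Set.inter_subset_left).ncard_image]
  congr 2
  ext b
  constructor
  · rintro ⟨⟨a, ha, rfl⟩, hb⟩
    exact ⟨a, ⟨ha, by simp_all⟩, rfl⟩
  · rintro ⟨a, ⟨ha, hwa⟩, rfl⟩
    exact ⟨⟨a, ha, rfl⟩, by simp_all⟩

lemma weightGF_singleton (a : α) : weightGF R w {a} = X ^ w a := by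
  ext n
  rw [coeff_weightGF, coeff_X_pow]
  split_ifs with h
  · rw [Set.inter_eq_left.2 (by simp [h]), Set.ncard_singleton, Nat.cast_one]
  · rw [Set.singleton_inter_eq_empty.2 (by simp [Ne.symm h]), Set.ncard_empty, Nat.cast_zero]

lemma weightGF_eq_X_pow_add_sdiff {a : α} (ha : a ∈ s) (hs : ∀ n, (s ∩ w ⁻¹' {n}).Finite) :
    weightGF R w s = X ^ w a + weightGF R w (s \ {a}) := by
  conv_lhs => rw [← Set.union_sdiff_cancel (Set.singleton_subset_iff.2 ha)]
  rw [weightGF_union (fun n => (Set.finite_singleton a).subset Set.inter_subset_left)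
    (fun n => (hs n).subset (Set.inter_subset_inter_left _ Set.sdiff_subset))
    Set.disjoint_sdiff_right, weightGF_singleton]

lemma weightGF_prod {t : Set β} (hs : ∀ n, (s ∩ w ⁻¹' {n}).Finite)
    (ht : ∀ n, (t ∩ v ⁻¹' {n}).Finite) :
    weightGF R (fun x : α × β => w x.1 + v x.2) (s ×ˢ t) = weightGF R w s * weightGF R v t := by
  ext n
  have hfin : ((s ×ˢ t) ∩ (fun x : α × β => w x.1 + v x.2) ⁻¹' {n}).Finite :=
    (((Finset.range (n + 1)).finite_toSet.biUnion fun i _ => hs i).prod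
      ((Finset.range (n + 1)).finite_toSet.biUnion fun j _ => ht j)).subset
      fun x ⟨⟨h1, h2⟩, (hx : w x.1 + v x.2 = n)⟩ =>
        ⟨Set.mem_biUnion (Finset.mem_coe.2 (Finset.mem_range.2 (by omega))) ⟨h1, rfl⟩,
          Set.mem_biUnion (Finset.mem_coe.2 (Finset.mem_range.2 (by omega))) ⟨h2, rfl⟩⟩
  rw [coeff_weightGF, coeff_mul, Set.ncard_eq_sum_ncard_inter_preimage hfin
    (fun x => (w x.1, v x.2)) (t := Finset.HasAntidiagonal.antidiagonal n)
    fun x hx => by simpa using hx.2]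
  push_cast
  refine Finset.sum_congr rfl fun ij hij => ?_
  rw [coeff_weightGF, coeff_weightGF, ← Nat.cast_mul, ← Set.ncard_prod]
  congr 2
  ext ⟨a, b⟩
  rw [Finset.HasAntidiagonal.mem_antidiagonal] at hij
  simp only [Set.mem_inter_iff, Set.mem_prod, Set.mem_preimage, Set.mem_singleton_iff,
    Prod.ext_iff]
  constructor
  · rintro ⟨⟨⟨ha, hb⟩, -⟩, h1, h2⟩
    exact ⟨⟨ha, h1⟩, hb, h2⟩
  · rintro ⟨⟨ha, h1⟩, hb, h2⟩
    exact ⟨⟨⟨ha, hb⟩, by omega⟩, h1, h2⟩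

lemma weightGF_image2 {u : γ → ℕ} {t : Set β} {f : α → β → γ}
    (hf : Set.InjOn (Function.uncurry f) (s ×ˢ t))
    (hw : ∀ a ∈ s, ∀ b ∈ t, u (f a b) = w a + v b)
    (hs : ∀ n, (s ∩ w ⁻¹' {n}).Finite) (ht : ∀ n, (t ∩ v ⁻¹' {n}).Finite) :
    weightGF R u (Set.image2 f s t) = weightGF R w s * weightGF R v t := by
  rw [← Set.image_uncurry_prod, weightGF_image hf (fun x hx => hw _ hx.1 _ hx.2),
    weightGF_prod hs ht]

open Classical in
lemma weightGF_id (s : Set ℕ) : weightGF R id s = mk fun n => if n ∈ s then 1 else 0 := by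
  ext n
  rw [coeff_weightGF, coeff_mk]
  split_ifs with h
  · rw [Set.inter_eq_right.2 (by simpa using h), Set.preimage_id, Set.ncard_singleton, Nat.cast_one]
  · rw [Set.preimage_id, Set.inter_singleton_eq_empty.2 h, Set.ncard_empty, Nat.cast_zero]

end WeightGF

section Paths

variable {S : Set (ℕ × ℕ)} {p q r u v : List (ℕ × ℕ)} {st : ℕ × ℕ}

def stepPaths (S : Set (ℕ × ℕ)) : Set (List (ℕ × ℕ)) := {p | ∀ st ∈ p, st ∈ S}

@[simp]
lemma nil_mem_stepPaths : [] ∈ stepPaths S :=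
  List.forall_mem_nil _

@[simp]
lemma append_mem_stepPaths : p ++ q ∈ stepPaths S ↔ p ∈ stepPaths S ∧ q ∈ stepPaths S :=
  List.forall_mem_append

@[simp]
lemma cons_mem_stepPaths : st :: p ∈ stepPaths S ↔ st ∈ S ∧ p ∈ stepPaths S :=
  List.forall_mem_cons

lemma xPart_eq (p : List (ℕ × ℕ)) (j : ℕ) : xPart p j = (p.take j).sum.1 :=
  (map_list_sum (AddMonoidHom.fst ℕ ℕ) _).symm

lemma yPart_eq (p : List (ℕ × ℕ)) (j : ℕ) : yPart p j = (p.take j).sum.2 :=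
  (map_list_sum (AddMonoidHom.snd ℕ ℕ) _).symm

lemma isPath_iff_s2 {n m : ℕ} : IsPath S n m p ↔ p ∈ stepPaths S ∧ p.sum = (n, m) := by
  simp [IsPath, xPart_eq, yPart_eq, stepPaths, Prod.ext_iff]

lemma isCatalan_iff : IsCatalan p ↔ ∀ q, q <+: p → q.sum.1 ≤ q.sum.2 := by
  refine ⟨fun hp q hq => ?_, fun hp j _ => ?_⟩
  · rw [List.prefix_iff_eq_take.1 hq, ← xPart_eq, ← yPart_eq]
    exact hp _ hq.length_le
  · rw [xPart_eq, yPart_eq]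
    exact hp _ (List.take_prefix j p)

lemma isCatalan_nil : IsCatalan [] :=
  isCatalan_iff.2 fun q hq => by simp [List.prefix_nil.1 hq]

lemma IsCatalan.sum_le (hp : IsCatalan p) : p.sum.1 ≤ p.sum.2 :=
  isCatalan_iff.1 hp p List.prefix_rfl

lemma IsCatalan.of_prefix (hp : IsCatalan p) (hq : q <+: p) : IsCatalan q :=
  isCatalan_iff.2 fun _ hr => isCatalan_iff.1 hp _ (hr.trans hq)

lemma isCatalan_concat_iff :
    IsCatalan (p ++ [st]) ↔ IsCatalan p ∧ (p ++ [st]).sum.1 ≤ (p ++ [st]).sum.2 := by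
  refine ⟨fun h => ⟨h.of_prefix (List.prefix_append _ _), h.sum_le⟩, fun ⟨hp, hst⟩ => ?_⟩
  refine isCatalan_iff.2 fun q hq => ?_
  rcases List.prefix_concat_iff.1 hq with rfl | hq
  exacts [hst, isCatalan_iff.1 hp q hq]

lemma isCatalan_append_iff (hq : IsCatalan q) (hd : q.sum.1 = q.sum.2) :
    IsCatalan (q ++ r) ↔ IsCatalan r := by
  simp only [isCatalan_iff]
  refine ⟨fun h t ht => ?_, fun h l hl => ?_⟩
  · have := h (q ++ t) ((List.prefix_append_right_inj q).2 ht)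
    simp only [List.sum_append, Prod.fst_add, Prod.snd_add] at this
    omega
  · rcases List.prefix_or_prefix_of_prefix hl (List.prefix_append q r) with hl | ⟨t, rfl⟩
    · exact isCatalan_iff.1 hq l hl
    · have := h t ((List.prefix_append_right_inj q).1 hl)
      simp only [List.sum_append, Prod.fst_add, Prod.snd_add]
      omega

def IsArch (q : List (ℕ × ℕ)) : Prop :=
  q ≠ [] ∧ q.sum.1 = q.sum.2 ∧ ∀ r, r <+: q → r ≠ [] → r ≠ q → r.sum.1 < r.sum.2

def IsStrictlyAbove (u : List (ℕ × ℕ)) : Prop :=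
  ∀ r, r <+: u → r ≠ [] → r.sum.1 < r.sum.2

def IsPrimitive (p : List (ℕ × ℕ)) : Prop :=
  ∀ q, q <+: p → ¬ IsArch q

lemma isStrictlyAbove_nil : IsStrictlyAbove [] :=
  fun _ hr hne => absurd (List.prefix_nil.1 hr) hne

lemma isPrimitive_nil : IsPrimitive [] :=
  fun _ hq hqa => hqa.1 (List.prefix_nil.1 hq)

lemma IsArch.isCatalan (hq : IsArch q) : IsCatalan q := by
  refine isCatalan_iff.2 fun r hr => ?_
  obtain rfl | hne := eq_or_ne r []
  · simp
  obtain rfl | hne' := eq_or_ne r q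
  · exact hq.2.1.le
  · exact (hq.2.2 r hr hne hne').le

lemma IsArch.eq_of_prefix {q' : List (ℕ × ℕ)} (hq : IsArch q) (hq' : IsArch q')
    (h : q <+: q') : q = q' := by
  by_contra hne
  exact (hq'.2.2 q h hq.1 hne).ne hq.2.1

lemma IsArch.append_inj {q' r' : List (ℕ × ℕ)} (hq : IsArch q) (hq' : IsArch q')
    (h : q ++ r = q' ++ r') : q = q' ∧ r = r' := by
  obtain rfl : q = q' := by
    rcases List.prefix_or_prefix_of_prefix (List.prefix_append q r)
      (h ▸ List.prefix_append q' r') with h' | h'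
    exacts [hq.eq_of_prefix hq' h', (hq'.eq_of_prefix hq h').symm]
  exact ⟨rfl, List.append_cancel_left h⟩

lemma isArch_singleton (a : ℕ) : IsArch [(a, a)] := by
  refine ⟨List.cons_ne_nil _ _, rfl, fun r hr hne hne' => absurd (hr.eq_of_length ?_) hne'⟩
  have := hr.length_le
  have := List.length_pos_of_ne_nil hne
  simp only [List.length_singleton] at *
  omega

lemma IsStrictlyAbove.isCatalan (hu : IsStrictlyAbove u) : IsCatalan u := by
  refine isCatalan_iff.2 fun r hr => ?_
  obtain rfl | hne := eq_or_ne r []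
  · simp
  · exact (hu r hr hne).le

lemma IsStrictlyAbove.isArch_close (hu : IsStrictlyAbove u) (hne : u ≠ []) :
    IsArch (u ++ [(u.sum.2 - u.sum.1, 0)]) := by
  have hlt := hu u List.prefix_rfl hne
  refine ⟨by simp, ?_, fun r hr hrne hr' => ?_⟩
  · simp only [List.sum_append, List.sum_singleton, Prod.fst_add, Prod.snd_add]
    omega
  · exact hu r ((List.prefix_concat_iff.1 hr).resolve_left hr') hrne

/-- The arch is the shortest nonempty prefix ending on the diagonal. -/
lemma IsCatalan.exists_isArch_prefix (hp : IsCatalan p) (hne : p ≠ []) (hd : p.sum.1 = p.sum.2) :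
    ∃ q, q <+: p ∧ IsArch q := by
  induction hn : p.length using Nat.strong_induction_on generalizing p with
  | _ n ih =>
    by_cases harch : IsArch p
    · exact ⟨p, List.prefix_rfl, harch⟩
    obtain ⟨r, hr, hrne, hrp, hr_le⟩ : ∃ r, r <+: p ∧ r ≠ [] ∧ r ≠ p ∧ r.sum.2 ≤ r.sum.1 := by
      simpa [IsArch, hne, hd] using harch
    have hlt : r.length < n := hn ▸ lt_of_le_of_ne hr.length_le (mt hr.eq_of_length hrp)
    obtain ⟨q, hq, hqa⟩ := ih _ hlt (hp.of_prefix hr) hrne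
      (le_antisymm (isCatalan_iff.1 hp r hr) hr_le) rfl
    exact ⟨q, hq.trans hr, hqa⟩

lemma IsPrimitive.eq_nil (hp : IsPrimitive p) (hc : IsCatalan p) (hd : p.sum.1 = p.sum.2) :
    p = [] := by
  by_contra hne
  obtain ⟨q, hq, hqa⟩ := hc.exists_isArch_prefix hne hd
  exact hp q hq hqa

lemma IsPrimitive.of_prefix (hp : IsPrimitive p) (hq : q <+: p) : IsPrimitive q :=
  fun r hr => hp r (hr.trans hq)

lemma IsPrimitive.isStrictlyAbove (hp : IsPrimitive u) (hc : IsCatalan u) : IsStrictlyAbove u :=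
  fun r hr hne => lt_of_le_of_ne (isCatalan_iff.1 hc r hr)
    fun hd => hne ((hp.of_prefix hr).eq_nil (hc.of_prefix hr) hd)

lemma exists_first_descent (hp : ¬ IsCatalan p) :
    ∃ u st v, p = u ++ st :: v ∧ IsCatalan u ∧ (u ++ [st]).sum.2 < (u ++ [st]).sum.1 := by
  induction p using List.reverseRecOn with
  | nil => exact absurd isCatalan_nil hp
  | append_singleton p st ih =>
    by_cases hc : IsCatalan p
    · exact ⟨p, st, [], rfl, hc, not_le.1 fun h => hp (isCatalan_concat_iff.2 ⟨hc, h⟩)⟩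
    · obtain ⟨u, st', v, rfl, hu, hd⟩ := ih hc
      exact ⟨u, st', v ++ [st], by simp, hu, hd⟩

lemma isPrimitive_of_descent (hu : IsStrictlyAbove u)
    (hd : (u ++ [st]).sum.2 < (u ++ [st]).sum.1) : IsPrimitive (u ++ st :: v) := by
  intro q hq hqa
  have hpre : u ++ [st] <+: u ++ st :: v := by simp
  rcases List.prefix_or_prefix_of_prefix hq hpre with hq' | hq'
  · rcases List.prefix_concat_iff.1 hq' with rfl | hq'
    · exact absurd hqa.2.1 (by omega)
    · exact (hu q hq' hqa.1).ne hqa.2.1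
  · exact absurd (isCatalan_iff.1 hqa.isCatalan _ hq') (not_le.2 hd)

lemma concat_eq_of_descent_of_prefix {u' : List (ℕ × ℕ)} {st' : ℕ × ℕ} (hu' : IsCatalan u')
    (hd : (u ++ [st]).sum.2 < (u ++ [st]).sum.1) (h : u ++ [st] <+: u' ++ [st']) :
    u ++ [st] = u' ++ [st'] :=
  (List.prefix_concat_iff.1 h).resolve_right fun h => not_le.2 hd (isCatalan_iff.1 hu' _ h)

/-- A path determines its first node strictly below the diagonal. -/
lemma append_cons_inj_of_descent {u' v' : List (ℕ × ℕ)} {st' : ℕ × ℕ}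
    (hu : IsCatalan u) (hu' : IsCatalan u') (hd : (u ++ [st]).sum.2 < (u ++ [st]).sum.1)
    (hd' : (u' ++ [st']).sum.2 < (u' ++ [st']).sum.1) (h : u ++ st :: v = u' ++ st' :: v') :
    u = u' ∧ st = st' ∧ v = v' := by
  have hpre : u ++ [st] = u' ++ [st'] := by
    have h₁ : u ++ [st] <+: u ++ st :: v := by simp
    have h₂ : u' ++ [st'] <+: u ++ st :: v := by rw [h]; simp
    rcases List.prefix_or_prefix_of_prefix h₁ h₂ with h' | h'
    exacts [concat_eq_of_descent_of_prefix hu' hd h',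
      (concat_eq_of_descent_of_prefix hu hd' h').symm]
  obtain ⟨rfl, hst⟩ := List.append_inj' hpre rfl
  obtain rfl : st = st' := List.singleton_inj.1 hst
  exact ⟨rfl, rfl, List.cons_injective (List.append_cancel_left h)⟩

lemma snd_eq_zero_of_lt_fst (hslope : ∀ a b : ℕ, (a, b) ∈ S → 0 < b → a ≤ b) (hst : st ∈ S)
    (h : st.2 < st.1) : st.2 = 0 := by
  by_contra h0
  have := hslope st.1 st.2 hst (Nat.pos_of_ne_zero h0)
  omega

end Paths

section Counting

variable {S : Set (ℕ × ℕ)} {p : List (ℕ × ℕ)}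

lemma length_le_sum (h00 : (0, 0) ∉ S) (hp : p ∈ stepPaths S) :
    p.length ≤ p.sum.1 + p.sum.2 := by
  induction p with
  | nil => simp
  | cons st p ih =>
    rw [cons_mem_stepPaths] at hp
    have hst : 0 < st.1 + st.2 := by
      obtain ⟨a, b⟩ := st
      have : (a, b) ≠ (0, 0) := fun h => h00 (h ▸ hp.1)
      simp only [ne_eq, Prod.mk.injEq, not_and_or] at this
      omega
    simp only [List.length_cons, List.sum_cons, Prod.fst_add, Prod.snd_add]
    have := ih hp.2
    omega

lemma finite_stepPaths_sum_le (h00 : (0, 0) ∉ S) (b : ℕ × ℕ) :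
    {p | p ∈ stepPaths S ∧ p.sum ≤ b}.Finite := by
  refine ((List.finite_length_le (Set.Iic b) (b.1 + b.2)).image (List.map Subtype.val)).subset ?_
  rintro p ⟨hS, hb⟩
  have hlen := length_le_sum h00 hS
  lift p to List (Set.Iic b) using fun st hst => (List.le_sum_of_mem hst).trans hb
  refine ⟨p, ?_, rfl⟩
  simp only [List.length_map] at hlen
  have := Prod.le_def.1 hb
  simp only [Set.mem_ofPred_eq]
  omega

lemma finite_height_fiber (h00 : (0, 0) ∉ S) {X : Set (List (ℕ × ℕ))}
    (hX : ∀ p ∈ X, p ∈ stepPaths S ∧ p.sum.1 ≤ p.sum.2) (n : ℕ) :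
    (X ∩ (fun p => p.sum.2) ⁻¹' {n}).Finite :=
  (finite_stepPaths_sum_le h00 (n, n)).subset fun p ⟨hp, hn⟩ => by
    simp only [Set.mem_preimage, Set.mem_singleton_iff] at hn
    have := hX p hp
    exact ⟨this.1, Prod.le_def.2 ⟨by omega, hn.le⟩⟩

noncomputable abbrev heightGF (X : Set (List (ℕ × ℕ))) : ℚ⟦X⟧ :=
  weightGF ℚ (fun p => p.sum.2) X

lemma heightGF_nil : heightGF {[]} = 1 := by
  rw [heightGF, weightGF_singleton, List.sum_nil, Prod.snd_zero, pow_zero]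

lemma heightGF_eq_one_add_sdiff_nil (h00 : (0, 0) ∉ S) {X : Set (List (ℕ × ℕ))}
    (hX : ∀ p ∈ X, p ∈ stepPaths S ∧ p.sum.1 ≤ p.sum.2) (hnil : [] ∈ X) :
    heightGF X = 1 + heightGF (X \ {[]}) := by
  rw [heightGF, weightGF_eq_X_pow_add_sdiff hnil (finite_height_fiber h00 hX), List.sum_nil,
    Prod.snd_zero, pow_zero]

lemma heightGF_eq_mk_sum_aCount (h00 : (0, 0) ∉ S) {Y : Set (List (ℕ × ℕ))} {m : ℕ → ℕ}
    (hY : ∀ p ∈ stepPaths S, p ∈ Y ↔ p.sum.1 < m p.sum.2) :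
    heightGF (stepPaths S ∩ Y) = mk fun n => ∑ j ∈ Finset.range (m n), (aCount S j n : ℚ) := by
  ext n
  rw [coeff_weightGF, coeff_mk, ← Nat.cast_sum]
  congr 1
  have hfin : (stepPaths S ∩ Y ∩ (fun p => p.sum.2) ⁻¹' {n}).Finite :=
    (finite_stepPaths_sum_le h00 (m n, n)).subset fun p ⟨⟨hS, hp⟩, hn⟩ => by
      simp only [Set.mem_preimage, Set.mem_singleton_iff] at hn
      have := (hY p hS).1 hp
      exact ⟨hS, Prod.le_def.2 ⟨by rw [hn] at this; omega, hn.le⟩⟩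
  rw [Set.ncard_eq_sum_ncard_inter_preimage hfin (fun p => p.sum.1) (t := Finset.range (m n))
    fun p ⟨⟨hS, hp⟩, hn⟩ => by
      simp only [Set.mem_preimage, Set.mem_singleton_iff] at hn
      simpa [hn] using (hY p hS).1 hp]
  refine Finset.sum_congr rfl fun j hj => ?_
  rw [aCount]
  congr 1
  ext p
  simp only [Set.mem_inter_iff, Set.mem_preimage, Set.mem_singleton_iff, Set.mem_ofPred_eq,
    isPath_iff_s2, Prod.ext_iff]
  constructor
  · rintro ⟨⟨⟨hS, -⟩, hn⟩, hj⟩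
    exact ⟨hS, hj, hn⟩
  · rintro ⟨hS, hj', hn⟩
    refine ⟨⟨⟨hS, (hY p hS).2 ?_⟩, hn⟩, hj'⟩
    rw [hj', hn]
    exact Finset.mem_range.1 hj

lemma heightGF_catalan :
    heightGF (stepPaths S ∩ {p | IsCatalan p ∧ p.sum.1 = p.sum.2}) =
      mk fun n => (pCatalan S n : ℚ) := by
  ext n
  rw [coeff_weightGF, coeff_mk, pCatalan]
  congr 2
  ext p
  simp only [Set.mem_inter_iff, Set.mem_preimage, Set.mem_singleton_iff, Set.mem_ofPred_eq,
    isPath_iff_s2, Prod.ext_iff]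
  constructor
  · rintro ⟨⟨hS, hc, hd⟩, hn⟩
    exact ⟨⟨hS, hd.trans hn, hn⟩, hc⟩
  · rintro ⟨⟨hS, h1, h2⟩, hc⟩
    exact ⟨⟨hS, hc, h1.trans h2.symm⟩, h2⟩

end Counting

section Decompositions

variable {S : Set (ℕ × ℕ)} {p q u v : List (ℕ × ℕ)}

lemma stepPaths_inter_eq_primitive_union_image2 {Y : Set (List (ℕ × ℕ))}
    (hY : ∀ q r, IsArch q → (q ++ r ∈ Y ↔ r ∈ Y)) :
    stepPaths S ∩ Y = stepPaths S ∩ Y ∩ {p | IsPrimitive p} ∪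
      Set.image2 (· ++ ·) (stepPaths S ∩ {q | IsArch q}) (stepPaths S ∩ Y) := by
  ext p
  refine ⟨fun hp => ?_, ?_⟩
  · by_cases hprim : IsPrimitive p
    · exact Or.inl ⟨hp, hprim⟩
    obtain ⟨q, ⟨r, rfl⟩, hq⟩ : ∃ q, q <+: p ∧ IsArch q := by
      simpa [IsPrimitive] using hprim
    obtain ⟨hS, hY'⟩ := hp
    rw [append_mem_stepPaths] at hS
    exact Or.inr ⟨q, ⟨hS.1, hq⟩, r, ⟨hS.2, (hY q r hq).1 hY'⟩, rfl⟩
  · rintro (hp | ⟨q, ⟨hqS, hq⟩, r, ⟨hrS, hr⟩, rfl⟩)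
    · exact hp.1
    · exact ⟨append_mem_stepPaths.2 ⟨hqS, hrS⟩, (hY q r hq).2 hr⟩

lemma heightGF_eq_primitive_add_arches_mul (h00 : (0, 0) ∉ S) {Y : Set (List (ℕ × ℕ))}
    (hY : ∀ q r, IsArch q → (q ++ r ∈ Y ↔ r ∈ Y)) (hYle : ∀ p ∈ Y, p.sum.1 ≤ p.sum.2) :
    heightGF (stepPaths S ∩ Y) = heightGF (stepPaths S ∩ Y ∩ {p | IsPrimitive p}) +
      heightGF (stepPaths S ∩ {q | IsArch q}) * heightGF (stepPaths S ∩ Y) := by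
  have hsplit := stepPaths_inter_eq_primitive_union_image2 (S := S) hY
  have hfib : ∀ X ⊆ stepPaths S ∩ Y, ∀ n, (X ∩ (fun p => p.sum.2) ⁻¹' {n}).Finite :=
    fun X hX => finite_height_fiber h00 fun p hp => ⟨(hX hp).1, hYle p (hX hp).2⟩
  have hdisj : Disjoint (stepPaths S ∩ Y ∩ {p | IsPrimitive p})
      (Set.image2 (· ++ ·) (stepPaths S ∩ {q | IsArch q}) (stepPaths S ∩ Y)) :=
    Set.disjoint_left.2 fun _ hp ⟨q, ⟨_, hq⟩, r, _, hqr⟩ =>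
      hp.2 q (hqr ▸ List.prefix_append q r) hq
  unfold heightGF
  conv_lhs => rw [hsplit]
  rw [weightGF_union (hfib _ (Set.subset_union_left.trans hsplit.superset))
    (hfib _ (Set.subset_union_right.trans hsplit.superset)) hdisj,
    weightGF_image2 ?_ (fun q _ r _ => by simp)
      (finite_height_fiber h00 fun q hq => ⟨hq.1, hq.2.isCatalan.sum_le⟩) (hfib _ subset_rfl)]
  rintro ⟨q, r⟩ ⟨⟨-, hq⟩, -⟩ ⟨q', r'⟩ ⟨⟨-, hq'⟩, -⟩ h
  obtain ⟨rfl, rfl⟩ := hq.append_inj hq' h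
  rfl

lemma heightGF_catalan_eq (h00 : (0, 0) ∉ S) :
    heightGF (stepPaths S ∩ {p | IsCatalan p ∧ p.sum.1 = p.sum.2}) =
      1 + heightGF (stepPaths S ∩ {q | IsArch q}) *
        heightGF (stepPaths S ∩ {p | IsCatalan p ∧ p.sum.1 = p.sum.2}) := by
  have hprim : stepPaths S ∩ {p | IsCatalan p ∧ p.sum.1 = p.sum.2} ∩ {p | IsPrimitive p} =
      {[]} := by
    ext p
    refine ⟨fun ⟨⟨_, hc, hd⟩, hp⟩ => hp.eq_nil hc hd, ?_⟩
    rintro rfl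
    exact ⟨⟨nil_mem_stepPaths, isCatalan_nil, rfl⟩, isPrimitive_nil⟩
  rw [← heightGF_nil, ← hprim]
  refine heightGF_eq_primitive_add_arches_mul h00 (fun q r hq => ?_) fun p hp => hp.2.le
  simp only [Set.mem_ofPred_eq, isCatalan_append_iff hq.isCatalan hq.2.1, List.sum_append,
    Prod.fst_add, Prod.snd_add, hq.2.1, add_left_cancel_iff]

lemma heightGF_above_eq_catalan_mul (h00 : (0, 0) ∉ S) :
    heightGF (stepPaths S ∩ {p | p.sum.1 ≤ p.sum.2}) =
      heightGF (stepPaths S ∩ {p | IsCatalan p ∧ p.sum.1 = p.sum.2}) *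
        heightGF (stepPaths S ∩ {p | p.sum.1 ≤ p.sum.2} ∩ {p | IsPrimitive p}) := by
  have hE := heightGF_eq_primitive_add_arches_mul h00 (S := S) (Y := {p | p.sum.1 ≤ p.sum.2})
    (fun q r hq => by
      simp only [Set.mem_ofPred_eq, List.sum_append, Prod.fst_add, Prod.snd_add, hq.2.1]
      omega) fun p hp => hp
  linear_combination (heightGF (stepPaths S ∩ {p | IsCatalan p ∧ p.sum.1 = p.sum.2})) * hE -
    heightGF (stepPaths S ∩ {p | p.sum.1 ≤ p.sum.2}) * heightGF_catalan_eq h00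

/-- The horizontal step is the one that makes the whole path end on the diagonal. -/
def diagonalJoin (u v : List (ℕ × ℕ)) : List (ℕ × ℕ) :=
  u ++ (u.sum.2 + v.sum.2 - u.sum.1 - v.sum.1, 0) :: v

lemma descent_diagonalJoin (hv : v.sum.1 < v.sum.2) :
    (u ++ [(u.sum.2 + v.sum.2 - u.sum.1 - v.sum.1, 0)]).sum.2 <
      (u ++ [(u.sum.2 + v.sum.2 - u.sum.1 - v.sum.1, 0)]).sum.1 := by
  simp only [List.sum_append, List.sum_singleton, Prod.fst_add, Prod.snd_add]
  omega

lemma diagonalJoin_mem (hhoriz : ∀ a : ℕ, 1 ≤ a → (a, 0) ∈ S) (hu : u ∈ stepPaths S)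
    (hu' : IsStrictlyAbove u) (hv : v ∈ stepPaths S) (hv' : v.sum.1 < v.sum.2) :
    diagonalJoin u v ∈ stepPaths S ∩ {p | p.sum.1 = p.sum.2} ∩ {p | IsPrimitive p} := by
  have hule := hu'.isCatalan.sum_le
  refine ⟨⟨?_, ?_⟩, isPrimitive_of_descent hu' (descent_diagonalJoin hv')⟩
  · exact append_mem_stepPaths.2 ⟨hu, cons_mem_stepPaths.2 ⟨hhoriz _ (by omega), hv⟩⟩
  · simp only [Set.mem_ofPred_eq, diagonalJoin, List.sum_append, List.sum_cons, Prod.fst_add,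
      Prod.snd_add]
    omega

lemma exists_diagonalJoin_eq (hslope : ∀ a b : ℕ, (a, b) ∈ S → 0 < b → a ≤ b)
    (hS : p ∈ stepPaths S) (hp : IsPrimitive p) (hd : p.sum.1 = p.sum.2) (hne : p ≠ []) :
    ∃ u v, (u ∈ stepPaths S ∧ IsStrictlyAbove u) ∧ (v ∈ stepPaths S ∧ v.sum.1 < v.sum.2) ∧
      diagonalJoin u v = p := by
  obtain ⟨u, st, v, rfl, hu, hdesc⟩ := exists_first_descent fun hc => hne (hp.eq_nil hc hd)
  simp only [append_mem_stepPaths, cons_mem_stepPaths] at hS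
  have hule := hu.sum_le
  simp only [List.sum_append, List.sum_cons, List.sum_nil, add_zero, Prod.fst_add,
    Prod.snd_add] at hdesc hd
  have hst : st.2 = 0 := snd_eq_zero_of_lt_fst hslope hS.2.1 (by omega)
  refine ⟨u, v, ⟨hS.1, (hp.of_prefix (List.prefix_append _ _)).isStrictlyAbove hu⟩,
    ⟨hS.2.2, by omega⟩, ?_⟩
  rw [diagonalJoin]
  congr 2
  exact Prod.ext (by omega) hst.symm

lemma diagonalJoin_injOn :
    Set.InjOn (Function.uncurry diagonalJoin)
      ({u | IsCatalan u} ×ˢ {v : List (ℕ × ℕ) | v.sum.1 < v.sum.2}) := by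
  rintro ⟨u, v⟩ ⟨hu, hv⟩ ⟨u', v'⟩ ⟨hu', hv'⟩ h
  simp only [Set.mem_ofPred_eq, Function.uncurry_apply_pair, diagonalJoin] at hu hv hu' hv' h
  obtain ⟨rfl, -, rfl⟩ := append_cons_inj_of_descent hu hu' (descent_diagonalJoin hv)
    (descent_diagonalJoin hv') h
  rfl

lemma stepPaths_primitive_diagonal_eq (hhoriz : ∀ a : ℕ, 1 ≤ a → (a, 0) ∈ S)
    (hslope : ∀ a b : ℕ, (a, b) ∈ S → 0 < b → a ≤ b) :
    stepPaths S ∩ {p | p.sum.1 = p.sum.2} ∩ {p | IsPrimitive p} = {[]} ∪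
      Set.image2 diagonalJoin (stepPaths S ∩ {u | IsStrictlyAbove u})
        (stepPaths S ∩ {v | v.sum.1 < v.sum.2}) := by
  ext p
  refine ⟨fun ⟨⟨hS, hd⟩, hp⟩ => ?_, ?_⟩
  · obtain rfl | hne := eq_or_ne p []
    · exact Or.inl rfl
    obtain ⟨u, v, hu, hv, rfl⟩ := exists_diagonalJoin_eq hslope hS hp hd hne
    exact Or.inr ⟨u, hu, v, hv, rfl⟩
  · rintro (rfl | ⟨u, ⟨hu, hu'⟩, v, ⟨hv, hv'⟩, rfl⟩)
    · exact ⟨⟨nil_mem_stepPaths, rfl⟩, isPrimitive_nil⟩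
    · exact diagonalJoin_mem hhoriz hu hu' hv hv'

lemma heightGF_primitive_diagonal (h00 : (0, 0) ∉ S) (hhoriz : ∀ a : ℕ, 1 ≤ a → (a, 0) ∈ S)
    (hslope : ∀ a b : ℕ, (a, b) ∈ S → 0 < b → a ≤ b) :
    heightGF (stepPaths S ∩ {p | p.sum.1 = p.sum.2} ∩ {p | IsPrimitive p}) =
      1 + heightGF (stepPaths S ∩ {u | IsStrictlyAbove u}) *
        heightGF (stepPaths S ∩ {v | v.sum.1 < v.sum.2}) := by
  have hsplit := stepPaths_primitive_diagonal_eq hhoriz hslope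
  have hfib : ∀ X ⊆ stepPaths S ∩ {p | p.sum.1 = p.sum.2} ∩ {p | IsPrimitive p}, ∀ n,
      (X ∩ (fun p => p.sum.2) ⁻¹' {n}).Finite :=
    fun X hX => finite_height_fiber h00 fun p hp => ⟨(hX hp).1.1, (hX hp).1.2.le⟩
  have hdisj : Disjoint {[]} (Set.image2 diagonalJoin (stepPaths S ∩ {u | IsStrictlyAbove u})
      (stepPaths S ∩ {v | v.sum.1 < v.sum.2})) := by
    rw [Set.disjoint_singleton_left]
    rintro ⟨u, -, v, -, h⟩
    simp [diagonalJoin] at h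
  rw [hsplit, ← heightGF_nil]
  unfold heightGF
  rw [weightGF_union (hfib _ (Set.subset_union_left.trans hsplit.superset))
    (hfib _ (Set.subset_union_right.trans hsplit.superset)) hdisj,
    weightGF_image2 ?_ (fun u _ v _ => by simp [diagonalJoin])
      (finite_height_fiber h00 fun u hu => ⟨hu.1, hu.2.isCatalan.sum_le⟩)
      (finite_height_fiber h00 fun v hv => ⟨hv.1, hv.2.le⟩)]
  exact diagonalJoin_injOn.mono (Set.prod_mono (fun u hu => hu.2.isCatalan) fun v hv => hv.2)

lemma exists_eq_close_of_isArch (h00 : (0, 0) ∉ S)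
    (hslope : ∀ a b : ℕ, (a, b) ∈ S → 0 < b → a ≤ b) (hS : q ∈ stepPaths S) (hq : IsArch q) :
    (∃ a, (1 ≤ a ∧ (a, a) ∈ S) ∧ [(a, a)] = q) ∨
      ∃ u, ((u ∈ stepPaths S ∧ IsStrictlyAbove u) ∧ u ≠ []) ∧
        u ++ [(u.sum.2 - u.sum.1, 0)] = q := by
  obtain ⟨u, ⟨a, b⟩, rfl⟩ := (List.eq_nil_or_concat' q).resolve_left hq.1
  simp only [append_mem_stepPaths, cons_mem_stepPaths, nil_mem_stepPaths, and_true] at hS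
  obtain ⟨hu, hab⟩ := hS
  have hd := hq.2.1
  simp only [List.sum_append, List.sum_singleton, Prod.fst_add, Prod.snd_add] at hd
  obtain rfl | hne := eq_or_ne u []
  · obtain rfl : a = b := by simpa using hd
    have ha : a ≠ 0 := by
      rintro rfl
      exact h00 hab
    exact Or.inl ⟨a, ⟨by omega, hab⟩, rfl⟩
  · have hu' : IsStrictlyAbove u := fun r hr hrne =>
      hq.2.2 r (hr.trans (List.prefix_append _ _)) hrne
        fun h => by simpa [h] using hr.length_le
    have hlt := hu' u List.prefix_rfl hne
    obtain rfl : b = 0 := snd_eq_zero_of_lt_fst hslope hab (by dsimp only; omega)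
    obtain rfl : a = u.sum.2 - u.sum.1 := by omega
    exact Or.inr ⟨u, ⟨⟨hu, hu'⟩, hne⟩, rfl⟩

lemma stepPaths_inter_isArch_eq (h00 : (0, 0) ∉ S) (hhoriz : ∀ a : ℕ, 1 ≤ a → (a, 0) ∈ S)
    (hslope : ∀ a b : ℕ, (a, b) ∈ S → 0 < b → a ≤ b) :
    stepPaths S ∩ {q | IsArch q} = (fun a => [(a, a)]) '' {a | 1 ≤ a ∧ (a, a) ∈ S} ∪
      (fun u => u ++ [(u.sum.2 - u.sum.1, 0)]) ''
        ((stepPaths S ∩ {u | IsStrictlyAbove u}) \ {[]}) := by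
  ext q
  refine ⟨fun ⟨hS, hq⟩ => exists_eq_close_of_isArch h00 hslope hS hq, ?_⟩
  rintro (⟨a, ⟨-, haS⟩, rfl⟩ | ⟨u, ⟨⟨hu, hu'⟩, hne⟩, rfl⟩)
  · exact ⟨by simp [haS], isArch_singleton a⟩
  · have hlt := hu' u List.prefix_rfl hne
    refine ⟨append_mem_stepPaths.2 ⟨hu, ?_⟩, hu'.isArch_close hne⟩
    simpa using hhoriz _ (by omega)

open Classical in
lemma heightGF_arches (h00 : (0, 0) ∉ S) (hhoriz : ∀ a : ℕ, 1 ≤ a → (a, 0) ∈ S)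
    (hslope : ∀ a b : ℕ, (a, b) ∈ S → 0 < b → a ≤ b) :
    heightGF (stepPaths S ∩ {q | IsArch q}) =
      (mk fun a => if 1 ≤ a ∧ (a, a) ∈ S then 1 else 0) +
        heightGF ((stepPaths S ∩ {u | IsStrictlyAbove u}) \ {[]}) := by
  have hsplit := stepPaths_inter_isArch_eq h00 hhoriz hslope
  have hfib : ∀ X ⊆ stepPaths S ∩ {q | IsArch q}, ∀ n,
      (X ∩ (fun p => p.sum.2) ⁻¹' {n}).Finite :=
    fun X hX => finite_height_fiber h00 fun q hq => ⟨(hX hq).1, (hX hq).2.isCatalan.sum_le⟩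
  have hdisj : Disjoint ((fun a => [(a, a)]) '' {a | 1 ≤ a ∧ (a, a) ∈ S})
      ((fun u => u ++ [(u.sum.2 - u.sum.1, 0)]) ''
        ((stepPaths S ∩ {u | IsStrictlyAbove u}) \ {[]})) := by
    refine Set.disjoint_left.2 ?_
    rintro _ ⟨a, -, rfl⟩ ⟨u, ⟨-, hne⟩, h⟩
    exact hne (by simpa using congrArg List.length h)
  unfold heightGF
  rw [hsplit, weightGF_union (hfib _ (Set.subset_union_left.trans hsplit.superset))
      (hfib _ (Set.subset_union_right.trans hsplit.superset)) hdisj,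
    weightGF_image (w := id) (fun a _ b _ h => by simpa using h) (fun a _ => by simp),
    weightGF_id]
  congr 1
  · congr! 3
  · exact weightGF_image (fun u _ u' _ h => (List.append_inj' h rfl).1) fun u _ => by simp

lemma heightGF_primitive_above_eq_add (h00 : (0, 0) ∉ S) :
    heightGF (stepPaths S ∩ {p | p.sum.1 ≤ p.sum.2} ∩ {p | IsPrimitive p}) =
      heightGF (stepPaths S ∩ {p | p.sum.1 < p.sum.2} ∩ {p | IsPrimitive p}) +
        heightGF (stepPaths S ∩ {p | p.sum.1 = p.sum.2} ∩ {p | IsPrimitive p}) := by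
  rw [heightGF, ← weightGF_union (finite_height_fiber h00 fun p hp => ⟨hp.1.1, hp.1.2.le⟩)
    (finite_height_fiber h00 fun p hp => ⟨hp.1.1, hp.1.2.le⟩)
    (Set.disjoint_left.2 fun p hp hp' => hp.1.2.ne hp'.1.2)]
  congr 1
  ext p
  simp only [Set.mem_union, Set.mem_inter_iff, Set.mem_ofPred_eq, le_iff_lt_or_eq]
  tauto

open Classical in
lemma heightGF_primitive_above (h00 : (0, 0) ∉ S) (hhoriz : ∀ a : ℕ, 1 ≤ a → (a, 0) ∈ S)
    (hslope : ∀ a b : ℕ, (a, b) ∈ S → 0 < b → a ≤ b) :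
    heightGF (stepPaths S ∩ {p | p.sum.1 ≤ p.sum.2} ∩ {p | IsPrimitive p}) =
      1 + (2 - mk fun a => if 1 ≤ a ∧ (a, a) ∈ S then 1 else 0) *
        heightGF (stepPaths S ∩ {p | p.sum.1 < p.sum.2}) := by
  have hE1 := heightGF_eq_primitive_add_arches_mul h00 (S := S) (Y := {p | p.sum.1 < p.sum.2})
    (fun q r hq => by
      simp only [Set.mem_ofPred_eq, List.sum_append, Prod.fst_add, Prod.snd_add, hq.2.1]
      omega) fun p hp => hp.le
  have hU := heightGF_eq_one_add_sdiff_nil h00 (X := stepPaths S ∩ {u | IsStrictlyAbove u})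
    (fun u hu => ⟨hu.1, hu.2.isCatalan.sum_le⟩) ⟨nil_mem_stepPaths, isStrictlyAbove_nil⟩
  linear_combination heightGF_primitive_above_eq_add h00 +
    heightGF_primitive_diagonal h00 hhoriz hslope - hE1 +
    heightGF (stepPaths S ∩ {p | p.sum.1 < p.sum.2}) * (hU - heightGF_arches h00 hhoriz hslope)

end Decompositions

open Classical in
theorem stmt2 (S : Set (ℕ × ℕ)) (h00 : (0, 0) ∉ S)
    (hhoriz : ∀ a : ℕ, 1 ≤ a → (a, 0) ∈ S)
    (hslope : ∀ a b : ℕ, (a, b) ∈ S → 0 < b → a ≤ b)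
    (P T E0 E1 : PowerSeries ℚ)
    (hP : P = PowerSeries.mk fun n => (pCatalan S n : ℚ))
    (hT : T = PowerSeries.mk fun a => if 1 ≤ a ∧ (a, a) ∈ S then 1 else 0)
    (hE0 : E0 = PowerSeries.mk fun n => ∑ j ∈ Finset.range (n + 1), (aCount S j n : ℚ))
    (hE1 : E1 = PowerSeries.mk fun n => ∑ j ∈ Finset.range n, (aCount S j n : ℚ)) :
    P * (1 + (2 - T) * E1) = E0 := by
  rw [hP, hT, hE0, hE1, ← heightGF_catalan,
    ← heightGF_eq_mk_sum_aCount h00 (Y := {p | p.sum.1 ≤ p.sum.2}) fun p _ => Nat.lt_succ_iff.symm,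
    ← heightGF_eq_mk_sum_aCount h00 (Y := {p | p.sum.1 < p.sum.2}) (m := fun n => n)
      fun p _ => Iff.rfl,
    ← heightGF_primitive_above h00 hhoriz hslope, heightGF_above_eq_catalan_mul h00]
end

section
/- Let S = {(a,0) : a ≥ 1} ∪ {(0,a) : a ≥ 1} be the set of rook steps, let p_n be the number of Catalan S-paths from (0,0) to (n,n), and let P(t) = Σ_{n≥0} p_n tⁿ ∈ ℚ⟦t⟧. Then P satisfies the quadratic equation 4t·P(t)² − (1+3t)·P(t) + 1 = 0 in ℚ⟦t⟧ (equivalently, P(t) = (1 + 3t − √(1 − 10t + 9t²))/(8t)). -/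
/-- The set of rook steps: proper horizontal and vertical steps. -/
def rookSteps : Set (ℕ × ℕ) :=
  {st | (∃ a : ℕ, 1 ≤ a ∧ st = (a, 0)) ∨ (∃ a : ℕ, 1 ≤ a ∧ st = (0, a))}

/-!
Cutting a Catalan path at its first return to the diagonal writes it uniquely as a *prime* path
(one that meets the diagonal only at its endpoints) followed by a Catalan path. Hence
`P = 1 + t R P`, where the coefficient of `tⁿ` in `R` counts prime paths to `(n + 1, n + 1)`.

A prime path to `(k + 2, k + 2)` starts with a vertical and ends with a horizontal step.
Shortening its first step by one (deleting it if it is a unit step) gives a path to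
`(k + 2, k + 1)` that is Catalan except at its last node, and shortening that path's last step in
the same way gives a Catalan path to `(k + 1, k + 1)`; each step of this is two-to-one. As the
only prime path to `(1, 1)` is `(0,1),(1,0)`, this says `R = 4P - 3`, and eliminating `R` gives
the quadratic equation.
-/

namespace RookCatalan

open Finset

section Lists

variable {α : Type*} {P : List α → Prop} {a : α} {l : List α}

theorem forall_prefix_cons :
    (∀ r, r <+: a :: l → P r) ↔ P [] ∧ ∀ r, r <+: l → P (a :: r) := by
  simp only [List.prefix_cons_iff]
  refine ⟨fun h => ⟨h [] (Or.inl rfl), fun r hr => h _ (Or.inr ⟨r, rfl, hr⟩)⟩, ?_⟩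
  rintro ⟨h₀, h⟩ r (rfl | ⟨t, rfl, ht⟩)
  exacts [h₀, h t ht]

theorem forall_prefix_ne_cons :
    (∀ r, r <+: a :: l → r ≠ a :: l → P r) ↔ P [] ∧ ∀ r, r <+: l → r ≠ l → P (a :: r) := by
  simp [forall_prefix_cons]

theorem forall_prefix_concat :
    (∀ r, r <+: l ++ [a] → P r) ↔ P (l ++ [a]) ∧ ∀ r, r <+: l → P r := by
  simp only [List.prefix_concat_iff, or_imp, forall_and, forall_eq]

theorem forall_prefix_ne_concat :
    (∀ r, r <+: l ++ [a] → r ≠ l ++ [a] → P r) ↔ ∀ r, r <+: l → P r := by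
  refine forall_prefix_concat.trans
    ⟨fun h r hr => h.2 r hr ?_, fun h => ⟨by simp, fun r hr _ => h r hr⟩⟩
  rintro rfl
  simpa using hr.length_le

theorem forall_prefix_append {l' : List α} :
    (∀ r, r <+: l ++ l' → P r) ↔ (∀ r, r <+: l → P r) ∧ ∀ r, r <+: l' → P (l ++ r) := by
  refine ⟨fun h => ⟨fun r hr => h r (hr.trans (List.prefix_append l l')),
    fun r hr => h _ ((List.prefix_append_right_inj l).mpr hr)⟩, fun ⟨h, h'⟩ r hr => ?_⟩
  rcases List.prefix_or_prefix_of_prefix hr (List.prefix_append l l') with hrl | ⟨r', rfl⟩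
  exacts [h r hrl, h' r' ((List.prefix_append_right_inj l).mp hr)]

theorem finite_setOf_length_le_forall_mem {s : Set α} (hs : s.Finite) (N : ℕ) :
    {l : List α | l.length ≤ N ∧ ∀ x ∈ l, x ∈ s}.Finite := by
  have := hs.to_subtype
  refine ((List.finite_length_le s N).image (List.map Subtype.val)).subset ?_
  rintro l ⟨hl, hls⟩
  exact ⟨l.attach.map fun x => ⟨x.1, hls _ x.2⟩, by simpa using hl, by simp⟩

theorem sum_map_fst {β : Type*} [AddMonoid α] [AddMonoid β] (l : List (α × β)) :
    (l.map Prod.fst).sum = l.sum.1 :=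
  ((AddMonoidHom.fst α β).map_list_sum l).symm

theorem sum_map_snd {β : Type*} [AddMonoid α] [AddMonoid β] (l : List (α × β)) :
    (l.map Prod.snd).sum = l.sum.2 :=
  ((AddMonoidHom.snd α β).map_list_sum l).symm

end Lists

theorem isPath_iff {S : Set (ℕ × ℕ)} {n m : ℕ} {p : List (ℕ × ℕ)} :
    IsPath S n m p ↔ (∀ s ∈ p, s ∈ S) ∧ p.sum = (n, m) := by
  simp [IsPath, xPart, yPart, sum_map_fst, sum_map_snd, Prod.ext_iff]

theorem isCatalan_iff {p : List (ℕ × ℕ)} : IsCatalan p ↔ ∀ r, r <+: p → r.sum.1 ≤ r.sum.2 := by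
  simp only [IsCatalan, xPart, yPart, sum_map_fst, sum_map_snd]
  refine ⟨fun h r hr => ?_, fun h j _ => h _ (List.take_prefix j p)⟩
  rw [List.prefix_iff_eq_take.mp hr]
  exact h _ hr.length_le

theorem mem_rookSteps_iff {s : ℕ × ℕ} :
    s ∈ rookSteps ↔ (0 < s.1 ∧ s.2 = 0) ∨ (s.1 = 0 ∧ 0 < s.2) := by
  obtain ⟨x, y⟩ := s
  simp only [rookSteps, Set.mem_ofPred_eq, Prod.mk.injEq]
  constructor
  · rintro (⟨a, ha, rfl, rfl⟩ | ⟨a, ha, rfl, rfl⟩)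
    exacts [Or.inl ⟨ha, rfl⟩, Or.inr ⟨rfl, ha⟩]
  · rintro (⟨hx, rfl⟩ | ⟨rfl, hy⟩)
    exacts [Or.inl ⟨x, hx, rfl, rfl⟩, Or.inr ⟨y, hy, rfl, rfl⟩]

@[simp] theorem vertical_mem_rookSteps (a : ℕ) : (0, a + 1) ∈ rookSteps :=
  Or.inr ⟨a + 1, by simp⟩

@[simp] theorem horizontal_mem_rookSteps (b : ℕ) : (b + 1, 0) ∈ rookSteps :=
  Or.inl ⟨b + 1, by simp⟩

theorem length_le_sum {p : List (ℕ × ℕ)} (hp : ∀ s ∈ p, s ∈ rookSteps) :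
    p.length ≤ p.sum.1 + p.sum.2 := by
  induction p with
  | nil => simp
  | cons s t ih =>
    simp only [List.forall_mem_cons] at hp
    have := mem_rookSteps_iff.mp hp.1
    simp only [List.length_cons, List.sum_cons, Prod.fst_add, Prod.snd_add]
    have := ih hp.2
    omega

theorem finite_rookPaths (v : ℕ × ℕ) :
    {p : List (ℕ × ℕ) | (∀ s ∈ p, s ∈ rookSteps) ∧ p.sum = v}.Finite := by
  refine (finite_setOf_length_le_forall_mem (Set.finite_Iic v) (v.1 + v.2)).subset ?_
  rintro p ⟨hp, rfl⟩
  exact ⟨length_le_sum hp, fun s hs => List.le_sum_of_mem hs⟩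

-- The nodes of a path `p` are the sums of its prefixes `r <+: p`.
def catalanPaths (n : ℕ) : Set (List (ℕ × ℕ)) :=
  {p | (∀ s ∈ p, s ∈ rookSteps) ∧ p.sum = (n, n) ∧ ∀ r, r <+: p → r.sum.1 ≤ r.sum.2}

def primePaths (n : ℕ) : Set (List (ℕ × ℕ)) :=
  {p | (∀ s ∈ p, s ∈ rookSteps) ∧ p.sum = (n, n) ∧
    ∀ r, r <+: p → r ≠ p → r ≠ [] → r.sum.1 < r.sum.2}

def almostCatalanPaths (k : ℕ) : Set (List (ℕ × ℕ)) :=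
  {p | (∀ s ∈ p, s ∈ rookSteps) ∧ p.sum = (k + 1, k) ∧
    ∀ r, r <+: p → r ≠ p → r.sum.1 ≤ r.sum.2}

theorem pCatalan_eq_card (n : ℕ) : pCatalan rookSteps n = Nat.card (catalanPaths n) := by
  simp only [pCatalan, isPath_iff, isCatalan_iff, ← Nat.card_coe_set_eq, and_assoc]
  rfl

instance (n : ℕ) : Finite (catalanPaths n) :=
  ((finite_rookPaths (n, n)).subset fun _ hp => ⟨hp.1, hp.2.1⟩).to_subtype

instance (n : ℕ) : Finite (primePaths n) :=
  ((finite_rookPaths (n, n)).subset fun _ hp => ⟨hp.1, hp.2.1⟩).to_subtype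

theorem primePaths_subset_catalanPaths (n : ℕ) : primePaths n ⊆ catalanPaths n := by
  rintro p ⟨hp, hsum, hprime⟩
  refine ⟨hp, hsum, fun r hr => ?_⟩
  by_cases hrp : r = p
  · simp [hrp, hsum]
  by_cases hr0 : r = []
  · simp [hr0]
  exact (hprime r hr hrp hr0).le

theorem exists_eq_cons_vertical {p : List (ℕ × ℕ)} (hp : ∀ s ∈ p, s ∈ rookSteps)
    (hx : 0 < p.sum.1) (hy : 0 < p.sum.2) (hnodes : ∀ r, r <+: p → r ≠ p → r.sum.1 ≤ r.sum.2) :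
    ∃ a t, p = (0, a + 1) :: t := by
  obtain _ | ⟨s, t⟩ := p
  · simp at hx
  have hs := mem_rookSteps_iff.mp (hp s List.mem_cons_self)
  obtain rfl | ht := eq_or_ne t []
  · simp at hx hy
    omega
  have := hnodes [s] (by simp) (by simpa using ht.symm)
  simp only [List.sum_singleton] at this
  exact ⟨s.2 - 1, t, by congr 1; ext <;> dsimp only <;> omega⟩

theorem exists_eq_concat_horizontal {p : List (ℕ × ℕ)} (hp : ∀ s ∈ p, s ∈ rookSteps)
    (hne : p ≠ []) (hend : p.sum.2 ≤ p.sum.1)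
    (hnodes : ∀ r, r <+: p → r ≠ p → r.sum.1 ≤ r.sum.2) :
    ∃ q b, p = q ++ [(b + 1, 0)] := by
  obtain ⟨q, s, rfl⟩ := (List.eq_nil_or_concat' p).resolve_left hne
  have hs := mem_rookSteps_iff.mp (hp s (by simp))
  have := hnodes q (List.prefix_append q [s]) (by simp)
  simp only [List.sum_append, List.sum_singleton, Prod.fst_add, Prod.snd_add] at hend
  exact ⟨q, s.1 - 1, by congr 2; ext <;> dsimp only <;> omega⟩

theorem exists_eq_concat_of_mem_catalanPaths {k : ℕ} {p : List (ℕ × ℕ)}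
    (hp : p ∈ catalanPaths (k + 1)) : ∃ q b, p = q ++ [(b + 1, 0)] := by
  obtain ⟨hp, hsum, hnodes⟩ := hp
  exact exists_eq_concat_horizontal hp (by rintro rfl; simp [Prod.ext_iff] at hsum)
    (by simp [hsum]) fun r hr _ => hnodes r hr

theorem exists_eq_concat_of_mem_almostCatalanPaths {k : ℕ} {p : List (ℕ × ℕ)}
    (hp : p ∈ almostCatalanPaths k) : ∃ q b, p = q ++ [(b + 1, 0)] := by
  obtain ⟨hp, hsum, hnodes⟩ := hp
  exact exists_eq_concat_horizontal hp (by rintro rfl; simp [Prod.ext_iff] at hsum)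
    (by simp [hsum]) hnodes

theorem exists_eq_cons_of_mem_primePaths {k : ℕ} {p : List (ℕ × ℕ)}
    (hp : p ∈ primePaths (k + 1)) : ∃ a t, p = (0, a + 1) :: t := by
  obtain ⟨hrook, hsum, hnodes⟩ := primePaths_subset_catalanPaths _ hp
  exact exists_eq_cons_vertical hrook (by simp [hsum]) (by simp [hsum]) fun r hr _ => hnodes r hr

theorem exists_eq_cons_of_mem_almostCatalanPaths {k : ℕ} {p : List (ℕ × ℕ)}
    (hp : p ∈ almostCatalanPaths (k + 1)) : ∃ a t, p = (0, a + 1) :: t := by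
  obtain ⟨hp, hsum, hnodes⟩ := hp
  exact exists_eq_cons_vertical hp (by simp [hsum]) (by simp [hsum]) hnodes

section EndSteps

variable {a b k : ℕ} {t q : List (ℕ × ℕ)}

theorem cons_mem_primePaths_iff :
    (0, a + 1) :: t ∈ primePaths (k + 1) ↔ (∀ s ∈ t, s ∈ rookSteps) ∧ t.sum.1 = k + 1 ∧
      a + t.sum.2 = k ∧ ∀ r, r <+: t → r ≠ t → r.sum.1 ≤ a + r.sum.2 := by
  simp only [primePaths, Set.mem_ofPred_eq, List.forall_mem_cons, vertical_mem_rookSteps,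
    true_and, forall_prefix_ne_cons, List.sum_cons, Prod.ext_iff, Prod.fst_add, Prod.snd_add,
    ne_eq, reduceCtorEq, not_false_eq_true, not_true_eq_false, forall_const, IsEmpty.forall_iff,
    zero_add, and_assoc]
  exact and_congr_right' <| and_congr_right' <| and_congr (by omega) <|
    forall₂_congr fun _ _ => imp_congr_right fun _ => by omega

theorem cons_mem_almostCatalanPaths_iff :
    (0, a + 1) :: t ∈ almostCatalanPaths k ↔ (∀ s ∈ t, s ∈ rookSteps) ∧ t.sum.1 = k + 1 ∧
      a + 1 + t.sum.2 = k ∧ ∀ r, r <+: t → r ≠ t → r.sum.1 ≤ a + 1 + r.sum.2 := by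
  simp only [almostCatalanPaths, Set.mem_ofPred_eq, List.forall_mem_cons, vertical_mem_rookSteps,
    true_and, forall_prefix_ne_cons, List.sum_cons, Prod.ext_iff, Prod.fst_add, Prod.snd_add,
    List.sum_nil, Prod.fst_zero, Prod.snd_zero, zero_le, zero_add, and_assoc]

theorem concat_mem_catalanPaths_iff :
    q ++ [(b + 1, 0)] ∈ catalanPaths k ↔ (∀ s ∈ q, s ∈ rookSteps) ∧ q.sum.1 + b + 1 = k ∧
      q.sum.2 = k ∧ ∀ r, r <+: q → r.sum.1 ≤ r.sum.2 := by
  simp only [catalanPaths, Set.mem_ofPred_eq, List.forall_mem_append, List.forall_mem_singleton,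
    horizontal_mem_rookSteps, and_true, forall_prefix_concat, List.sum_append, List.sum_singleton,
    Prod.ext_iff, Prod.fst_add, Prod.snd_add, add_zero, and_assoc]
  constructor
  · rintro ⟨hq, hx, hy, -, hr⟩
    exact ⟨hq, by omega, hy, hr⟩
  · rintro ⟨hq, hx, hy, hr⟩
    exact ⟨hq, by omega, hy, by omega, hr⟩

theorem concat_mem_almostCatalanPaths_iff :
    q ++ [(b + 1, 0)] ∈ almostCatalanPaths k ↔ (∀ s ∈ q, s ∈ rookSteps) ∧ q.sum.1 + b = k ∧
      q.sum.2 = k ∧ ∀ r, r <+: q → r.sum.1 ≤ r.sum.2 := by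
  simp only [almostCatalanPaths, Set.mem_ofPred_eq, List.forall_mem_append,
    List.forall_mem_singleton, horizontal_mem_rookSteps, and_true, forall_prefix_ne_concat,
    List.sum_append, List.sum_singleton, Prod.ext_iff, Prod.fst_add, Prod.snd_add, add_zero,
    and_assoc]
  exact and_congr_right' <| and_congr (by omega) Iff.rfl

theorem concat_one_mem_almostCatalanPaths_iff :
    q ++ [(1, 0)] ∈ almostCatalanPaths k ↔ q ∈ catalanPaths k := by
  simpa [catalanPaths, Prod.ext_iff, and_assoc] using concat_mem_almostCatalanPaths_iff (b := 0)

theorem concat_succ_succ_mem_almostCatalanPaths_iff :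
    q ++ [(b + 2, 0)] ∈ almostCatalanPaths k ↔ q ++ [(b + 1, 0)] ∈ catalanPaths k := by
  rw [concat_mem_almostCatalanPaths_iff, concat_mem_catalanPaths_iff, add_assoc]

theorem cons_one_mem_primePaths_iff :
    (0, 1) :: t ∈ primePaths (k + 1) ↔ t ∈ almostCatalanPaths k := by
  simpa [almostCatalanPaths, Prod.ext_iff, and_assoc] using cons_mem_primePaths_iff (a := 0)

theorem cons_succ_succ_mem_primePaths_iff :
    (0, a + 2) :: t ∈ primePaths (k + 1) ↔ (0, a + 1) :: t ∈ almostCatalanPaths k := by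
  rw [cons_mem_primePaths_iff, cons_mem_almostCatalanPaths_iff]

end EndSteps

def extendLast (β : Bool) (p : List (ℕ × ℕ)) : List (ℕ × ℕ) :=
  if β then p ++ [(1, 0)] else p.modifyLast (· + (1, 0))

def extendFirst (β : Bool) (p : List (ℕ × ℕ)) : List (ℕ × ℕ) :=
  if β then (0, 1) :: p else p.modifyHead (· + (0, 1))

theorem card_almostCatalanPaths (k : ℕ) :
    Nat.card (almostCatalanPaths (k + 1)) = 2 * Nat.card (catalanPaths (k + 1)) := by
  have hmaps (β : Bool) {c : List (ℕ × ℕ)} (hc : c ∈ catalanPaths (k + 1)) :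
      extendLast β c ∈ almostCatalanPaths (k + 1) := by
    cases β
    · obtain ⟨q, b, rfl⟩ := exists_eq_concat_of_mem_catalanPaths hc
      simpa [extendLast, List.modifyLast_concat, concat_succ_succ_mem_almostCatalanPaths_iff]
        using hc
    · exact concat_one_mem_almostCatalanPaths_iff.mpr hc
  let f (x : Bool × catalanPaths (k + 1)) : almostCatalanPaths (k + 1) :=
    ⟨extendLast x.1 x.2, hmaps x.1 x.2.2⟩
  have hf : f.Bijective := by
    constructor
    · rintro ⟨β, c, hc⟩ ⟨β', c', hc'⟩ h
      obtain ⟨q, b, rfl⟩ := exists_eq_concat_of_mem_catalanPaths hc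
      obtain ⟨q', b', rfl⟩ := exists_eq_concat_of_mem_catalanPaths hc'
      have h' := congrArg Subtype.val h
      cases β <;> cases β' <;>
        simp only [f, extendLast, Bool.false_eq_true, if_true, if_false,
          List.modifyLast_concat] at h' <;>
        obtain ⟨h₁, h₂⟩ := List.append_inj' h' rfl <;> simp_all
    · rintro ⟨p, hp⟩
      obtain ⟨q, b, rfl⟩ := exists_eq_concat_of_mem_almostCatalanPaths hp
      obtain _ | b := b
      · exact ⟨(true, ⟨q, concat_one_mem_almostCatalanPaths_iff.mp hp⟩), rfl⟩
      · refine ⟨(false, ⟨q ++ [(b + 1, 0)],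
          concat_succ_succ_mem_almostCatalanPaths_iff.mp hp⟩), ?_⟩
        simp [f, extendLast, List.modifyLast_concat]
  rw [← Nat.card_eq_of_bijective f hf, Nat.card_prod, Nat.card_eq_fintype_card (α := Bool),
    Fintype.card_bool]

theorem card_primePaths_add_two (k : ℕ) :
    Nat.card (primePaths (k + 2)) = 2 * Nat.card (almostCatalanPaths (k + 1)) := by
  have hmaps (β : Bool) {h : List (ℕ × ℕ)} (hh : h ∈ almostCatalanPaths (k + 1)) :
      extendFirst β h ∈ primePaths (k + 2) := by
    cases β
    · obtain ⟨a, t, rfl⟩ := exists_eq_cons_of_mem_almostCatalanPaths hh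
      simpa [extendFirst, cons_succ_succ_mem_primePaths_iff] using hh
    · exact cons_one_mem_primePaths_iff.mpr hh
  let f (x : Bool × almostCatalanPaths (k + 1)) : primePaths (k + 2) :=
    ⟨extendFirst x.1 x.2, hmaps x.1 x.2.2⟩
  have hf : f.Bijective := by
    constructor
    · rintro ⟨β, h, hh⟩ ⟨β', h', hh'⟩ heq
      obtain ⟨a, t, rfl⟩ := exists_eq_cons_of_mem_almostCatalanPaths hh
      obtain ⟨a', t', rfl⟩ := exists_eq_cons_of_mem_almostCatalanPaths hh'
      have heq' := congrArg Subtype.val heq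
      cases β <;> cases β' <;> simp_all [f, extendFirst]
    · rintro ⟨p, hp⟩
      obtain ⟨a, t, rfl⟩ := exists_eq_cons_of_mem_primePaths hp
      obtain _ | a := a
      · exact ⟨(true, ⟨t, cons_one_mem_primePaths_iff.mp hp⟩), rfl⟩
      · refine ⟨(false, ⟨(0, a + 1) :: t, cons_succ_succ_mem_primePaths_iff.mp hp⟩), ?_⟩
        simp [f, extendFirst]
  rw [← Nat.card_eq_of_bijective f hf, Nat.card_prod, Nat.card_eq_fintype_card (α := Bool),
    Fintype.card_bool]

theorem append_mem_catalanPaths {a b : List (ℕ × ℕ)} {i j : ℕ} (ha : a ∈ catalanPaths i)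
    (hb : b ∈ catalanPaths j) : a ++ b ∈ catalanPaths (i + j) := by
  obtain ⟨ha, hasum, hanodes⟩ := ha
  obtain ⟨hb, hbsum, hbnodes⟩ := hb
  refine ⟨List.forall_mem_append.mpr ⟨ha, hb⟩, by simp [hasum, hbsum],
    forall_prefix_append.mpr ⟨hanodes, fun r hr => ?_⟩⟩
  simpa [hasum] using hbnodes r hr

theorem eq_of_prefix_of_mem_primePaths {a a' : List (ℕ × ℕ)} {n : ℕ} (ha : a ≠ [])
    (hbal : a.sum.1 = a.sum.2) (ha' : a' ∈ primePaths n) (hpre : a <+: a') : a = a' :=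
  by_contra fun hne => (ha'.2.2 a hpre hne ha).ne hbal

theorem append_inj_of_mem_primePaths {a a' b b' : List (ℕ × ℕ)} {i i' : ℕ}
    (ha : a ∈ primePaths (i + 1)) (ha' : a' ∈ primePaths (i' + 1)) (h : a ++ b = a' ++ b') :
    a = a' ∧ b = b' := by
  have key {a a' : List (ℕ × ℕ)} {i i' : ℕ} (ha : a ∈ primePaths (i + 1))
      (ha' : a' ∈ primePaths (i' + 1)) (hpre : a <+: a') : a = a' :=
    eq_of_prefix_of_mem_primePaths (by rintro rfl; simpa [Prod.ext_iff] using ha.2.1)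
      (by simp [ha.2.1]) ha' hpre
  have hpre : a <+: a' ∨ a' <+: a :=
    List.prefix_or_prefix_of_prefix (List.prefix_append a b) (h ▸ List.prefix_append a' b')
  obtain rfl : a = a' := hpre.elim (key ha ha') fun hpre => (key ha' ha hpre).symm
  exact ⟨rfl, List.append_cancel_left h⟩

theorem exists_eq_prime_append {n : ℕ} {p : List (ℕ × ℕ)} (hp : p ∈ catalanPaths (n + 1)) :
    ∃ ij ∈ antidiagonal n, ∃ a ∈ primePaths (ij.1 + 1), ∃ b ∈ catalanPaths ij.2, p = a ++ b := by
  obtain ⟨hrook, hsum, hnodes⟩ := hp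
  have hp0 : p ≠ [] := by rintro rfl; simp [Prod.ext_iff] at hsum
  obtain ⟨a, ⟨⟨b, rfl⟩, ha0, hbal⟩, hmin⟩ := (measure List.length).wf.has_min
    {a | a <+: p ∧ a ≠ [] ∧ a.sum.1 = a.sum.2} ⟨p, List.prefix_refl p, hp0, by simp [hsum]⟩
  obtain ⟨ha, hb⟩ := List.forall_mem_append.mp hrook
  obtain ⟨i, hi⟩ : ∃ i, a.sum.1 = i + 1 := by
    have := length_le_sum ha
    have := List.length_pos_iff.mpr ha0
    exact ⟨a.sum.1 - 1, by omega⟩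
  have hasum : a.sum = (i + 1, i + 1) := Prod.ext hi (hbal ▸ hi)
  have hbsum : b.sum = (n - i, n - i) := by
    simp only [List.sum_append, hasum, Prod.ext_iff, Prod.fst_add, Prod.snd_add] at hsum
    ext <;> simp only <;> omega
  refine ⟨(i, n - i), ?_, a, ⟨ha, hasum, fun r hr hra hr0 => ?_⟩, b,
    ⟨hb, hbsum, fun r hr => ?_⟩, rfl⟩
  · have := congrArg Prod.fst hsum
    simp only [List.sum_append, hasum, Prod.fst_add] at this
    simp only [HasAntidiagonal.mem_antidiagonal]
    omega
  · refine (hnodes r (hr.trans (List.prefix_append a b))).lt_of_ne fun hbal' => hmin r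
      ⟨hr.trans (List.prefix_append a b), hr0, hbal'⟩ ?_
    exact hr.length_le.lt_of_ne fun hlen => hra (hr.eq_of_length hlen)
  · simpa [hasum] using hnodes (a ++ r) ((List.prefix_append_right_inj a).mpr hr)

theorem card_catalanPaths_succ (n : ℕ) :
    Nat.card (catalanPaths (n + 1)) =
      ∑ ij ∈ antidiagonal n, Nat.card (primePaths (ij.1 + 1)) * Nat.card (catalanPaths ij.2) := by
  have hmem (x : Σ ij : antidiagonal n, primePaths (ij.1.1 + 1) × catalanPaths ij.1.2) :
      x.2.1.1 ++ x.2.2.1 ∈ catalanPaths (n + 1) := by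
    obtain ⟨⟨⟨i, j⟩, hij⟩, ⟨a, ha⟩, ⟨b, hb⟩⟩ := x
    obtain rfl : i + j = n := HasAntidiagonal.mem_antidiagonal.mp hij
    rw [add_right_comm]
    exact append_mem_catalanPaths (primePaths_subset_catalanPaths _ ha) hb
  let f (x : Σ ij : antidiagonal n, primePaths (ij.1.1 + 1) × catalanPaths ij.1.2) :
      catalanPaths (n + 1) := ⟨x.2.1.1 ++ x.2.2.1, hmem x⟩
  have hf : f.Bijective := by
    constructor
    · rintro ⟨⟨⟨i, j⟩, hij⟩, ⟨a, ha⟩, ⟨b, hb⟩⟩ ⟨⟨⟨i', j'⟩, hij'⟩, ⟨a', ha'⟩, ⟨b', hb'⟩⟩ h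
      obtain ⟨rfl, rfl⟩ := append_inj_of_mem_primePaths ha ha' (congrArg Subtype.val h)
      obtain rfl : i = i' := by simpa using ha.2.1.symm.trans ha'.2.1
      obtain rfl : j = j' := by rw [HasAntidiagonal.mem_antidiagonal] at hij hij'; omega
      rfl
    · rintro ⟨p, hp⟩
      obtain ⟨ij, hij, a, ha, b, hb, rfl⟩ := exists_eq_prime_append hp
      exact ⟨⟨⟨ij, hij⟩, ⟨a, ha⟩, ⟨b, hb⟩⟩, rfl⟩
  rw [← Nat.card_eq_of_bijective f hf, Nat.card_sigma]
  simp only [Nat.card_prod]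
  exact Finset.sum_coe_sort (antidiagonal n) fun ij =>
    Nat.card (primePaths (ij.1 + 1)) * Nat.card (catalanPaths ij.2)

theorem catalanPaths_zero : catalanPaths 0 = {[]} := by
  refine Set.eq_singleton_iff_unique_mem.mpr
    ⟨by simp [catalanPaths, Prod.ext_iff], fun p ⟨hp, hsum, _⟩ => ?_⟩
  simpa [hsum] using length_le_sum hp

theorem primePaths_one : primePaths 1 = {[(0, 1), (1, 0)]} := by
  refine Set.eq_singleton_iff_unique_mem.mpr ⟨cons_one_mem_primePaths_iff.mpr
    (concat_one_mem_almostCatalanPaths_iff (q := []).mpr (by simp [catalanPaths, Prod.ext_iff])),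
    fun p hp => ?_⟩
  obtain ⟨a, t, rfl⟩ := exists_eq_cons_of_mem_primePaths hp
  obtain rfl : a = 0 := by have := (cons_mem_primePaths_iff.mp hp).2.2.1; omega
  have ht := cons_one_mem_primePaths_iff.mp hp
  obtain ⟨q, b, rfl⟩ := exists_eq_concat_of_mem_almostCatalanPaths ht
  obtain ⟨hq, hx, hy, -⟩ := concat_mem_almostCatalanPaths_iff.mp ht
  obtain rfl : q = [] := List.eq_nil_of_length_eq_zero (by have := length_le_sum hq; omega)
  obtain rfl : b = 0 := by simpa using hx
  rfl

open PowerSeries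

noncomputable def catalanSeries : ℚ⟦X⟧ := mk fun n => (Nat.card (catalanPaths n) : ℚ)

noncomputable def primeSeries : ℚ⟦X⟧ := mk fun n => (Nat.card (primePaths (n + 1)) : ℚ)

theorem catalanSeries_eq : catalanSeries = 1 + X * (primeSeries * catalanSeries) := by
  ext (_ | n)
  · simp only [catalanSeries, catalanPaths_zero, coeff_mk, map_add, coeff_zero_X_mul, coeff_one]
    simp
  · rw [map_add, coeff_one, if_neg n.succ_ne_zero, zero_add, coeff_succ_X_mul, coeff_mul]
    simp only [catalanSeries, primeSeries, coeff_mk, card_catalanPaths_succ, Nat.cast_sum,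
      Nat.cast_mul]

theorem primeSeries_eq : primeSeries = 4 * catalanSeries - 3 := by
  rw [← map_ofNat (C (R := ℚ)) 4, ← map_ofNat (C (R := ℚ)) 3]
  ext (_ | n) <;> simp only [catalanSeries, primeSeries, map_sub, coeff_C_mul, coeff_C, coeff_mk]
  · simp [catalanPaths_zero, primePaths_one]
    norm_num
  · rw [card_primePaths_add_two, card_almostCatalanPaths, if_neg n.succ_ne_zero]
    push_cast
    ring

end RookCatalan

theorem stmt4 (P : PowerSeries ℚ)
    (hP : P = PowerSeries.mk fun n => (pCatalan rookSteps n : ℚ)) :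
    4 * PowerSeries.X * P ^ 2 - (1 + 3 * PowerSeries.X) * P + 1 = 0 := by
  obtain rfl : P = RookCatalan.catalanSeries := by
    simp only [hP, RookCatalan.catalanSeries, RookCatalan.pCatalan_eq_card]
  linear_combination -RookCatalan.catalanSeries_eq -
    PowerSeries.X * RookCatalan.catalanSeries * RookCatalan.primeSeries_eq
end

section
/- Let S = {(a,0) : a ≥ 1} ∪ {(0,a) : a ≥ 1} ∪ {(a,a) : a ≥ 1} be the set of queen steps, let p_n be the number of Catalan S-paths from (0,0) to (n,n), and let P(t) = Σ_{n≥0} p_n tⁿ ∈ ℚ⟦t⟧. Then P satisfies the quadratic equation t(2−3t)²·P(t)² − (4t³ − 5t² + 1)·P(t) + (1−t)² = 0 in ℚ⟦t⟧. -/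
/-- The set of queen steps: proper horizontal, vertical and diagonal steps. -/
def queenSteps : Set (ℕ × ℕ) :=
  {st | (∃ a : ℕ, 1 ≤ a ∧ st = (a, 0)) ∨ (∃ a : ℕ, 1 ≤ a ∧ st = (0, a)) ∨
        (∃ a : ℕ, 1 ≤ a ∧ st = (a, a))}

/-!
Decomposing a Catalan path by its last step gives a linear recursion for the number `q(x, k)`
of Catalan queen paths ending at `(x, x + k)`. For the series `F_k(t) = ∑ₓ q(x, k) tˣ` and
`Φ(u) = ∑ₖ F_k(t) uᵏ` it becomes the kernel equation
`K(t, u) Φ(u) = (1 - t)(1 - u)(u - t(1 + G))` with `G = Φ(t)`, valid for every `u` without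
constant term. Substituting `u = t(1 + G)` kills the right-hand side, and `Φ(u)` has constant
term `1`, so `K(t, t(1 + G)) = 0`: a quadratic equation for `G`. The case `k = 0` of the
recursion reads `P = 1 + (G - P) + tP/(1 - t)`, i.e. `(2 - 3t) P = (1 - t)(1 + G)`, and
eliminating `G` gives the equation for `P`.
-/

open Finset

section Paths

variable {S : Set (ℕ × ℕ)} {v : ℕ × ℕ} {p : List (ℕ × ℕ)} {st : ℕ × ℕ}

def catalanPaths (S : Set (ℕ × ℕ)) (v : ℕ × ℕ) : Set (List (ℕ × ℕ)) :=
  {p | IsPath S v.1 v.2 p ∧ IsCatalan p}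

lemma xPart_append_singleton_of_le {j : ℕ} (h : j ≤ p.length) :
    xPart (p ++ [st]) j = xPart p j := by
  simp [xPart, List.take_append_of_le_length h]

lemma yPart_append_singleton_of_le {j : ℕ} (h : j ≤ p.length) :
    yPart (p ++ [st]) j = yPart p j := by
  simp [yPart, List.take_append_of_le_length h]

lemma xPart_append_singleton_length :
    xPart (p ++ [st]) (p ++ [st]).length = xPart p p.length + st.1 := by
  simp [xPart]

lemma yPart_append_singleton_length :
    yPart (p ++ [st]) (p ++ [st]).length = yPart p p.length + st.2 := by
  simp [yPart]

lemma isPath_append_singleton_iff {x y : ℕ} :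
    IsPath S x y (p ++ [st]) ↔
      st ∈ S ∧ st.1 ≤ x ∧ st.2 ≤ y ∧ IsPath S (x - st.1) (y - st.2) p := by
  simp only [IsPath, xPart_append_singleton_length, yPart_append_singleton_length,
    List.mem_append, List.mem_singleton]
  constructor
  · rintro ⟨hS, hx, hy⟩
    exact ⟨hS st (.inr rfl), by omega, by omega, fun s hs => hS s (.inl hs), by omega, by omega⟩
  · rintro ⟨hst, hx, hy, hS, hx', hy'⟩
    exact ⟨by rintro s (hs | rfl) <;> solve_by_elim, by omega, by omega⟩

lemma isCatalan_append_singleton_iff :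
    IsCatalan (p ++ [st]) ↔
      IsCatalan p ∧ xPart p p.length + st.1 ≤ yPart p p.length + st.2 := by
  rw [← xPart_append_singleton_length, ← yPart_append_singleton_length]
  constructor
  · intro h
    refine ⟨fun j hj => ?_, h _ le_rfl⟩
    rw [← xPart_append_singleton_of_le hj, ← yPart_append_singleton_of_le hj]
    exact h j (by rw [List.length_append, List.length_singleton]; omega)
  · rintro ⟨h, hlast⟩ j hj
    rw [List.length_append, List.length_singleton] at hj hlast
    obtain hj | rfl : j ≤ p.length ∨ j = p.length + 1 := by omega
    · rw [xPart_append_singleton_of_le hj, yPart_append_singleton_of_le hj]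
      exact h j hj
    · exact hlast

lemma append_singleton_mem_catalanPaths_iff :
    p ++ [st] ∈ catalanPaths S v ↔
      st ∈ S ∧ st ≤ v ∧ v.1 ≤ v.2 ∧ p ∈ catalanPaths S (v - st) := by
  simp only [catalanPaths, Set.mem_ofPred_eq, isPath_append_singleton_iff,
    isCatalan_append_singleton_iff, Prod.fst_sub, Prod.snd_sub, Prod.le_def]
  unfold IsPath
  constructor
  · rintro ⟨⟨hst, h1, h2, hS, hx, hy⟩, hC, hlast⟩
    exact ⟨hst, ⟨h1, h2⟩, by omega, ⟨hS, hx, hy⟩, hC⟩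
  · rintro ⟨hst, ⟨h1, h2⟩, hv, ⟨hS, hx, hy⟩, hC⟩
    exact ⟨⟨hst, h1, h2, hS, hx, hy⟩, hC, by omega⟩

lemma nil_mem_catalanPaths_iff : [] ∈ catalanPaths S v ↔ v = 0 := by
  simp [catalanPaths, IsPath, IsCatalan, xPart, yPart, Prod.ext_iff, eq_comm]

lemma catalanPaths_eq_empty (hv : v.2 < v.1) : catalanPaths S v = ∅ := by
  refine Set.eq_empty_of_forall_notMem fun p ⟨⟨_, hx, hy⟩, hC⟩ => ?_
  have := hC p.length le_rfl
  omega

lemma catalanPaths_zero (hS : (0, 0) ∉ S) : catalanPaths S 0 = {[]} := by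
  ext p
  rcases p.eq_nil_or_concat' with rfl | ⟨q, st, rfl⟩
  · simp [nil_mem_catalanPaths_iff]
  · simp only [append_singleton_mem_catalanPaths_iff, Set.mem_singleton_iff,
      List.append_eq_nil_iff, List.cons_ne_nil, and_false, iff_false]
    rintro ⟨hst, hle, -⟩
    rw [nonpos_iff_eq_zero.mp hle] at hst
    exact hS hst

lemma catalanPaths_eq_biUnion (hv : v.1 ≤ v.2) (h0 : v ≠ 0) :
    catalanPaths S v = ⋃ st ∈ S ∩ Set.Iic v, (· ++ [st]) '' catalanPaths S (v - st) := by
  ext p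
  simp only [Set.mem_iUnion, Set.mem_image, Set.mem_inter_iff, Set.mem_Iic, exists_prop]
  rcases p.eq_nil_or_concat' with rfl | ⟨q, st, rfl⟩
  · simp [nil_mem_catalanPaths_iff, h0]
  · simp only [append_singleton_mem_catalanPaths_iff, List.append_singleton_inj]
    constructor
    · rintro ⟨hst, hle, -, hq⟩
      exact ⟨st, ⟨hst, hle⟩, q, hq, rfl, rfl⟩
    · rintro ⟨st, ⟨hst, hle⟩, q, hq, rfl, rfl⟩
      exact ⟨hst, hle, hv, hq⟩

lemma finite_catalanPaths (hS : (0, 0) ∉ S) (v : ℕ × ℕ) : (catalanPaths S v).Finite := by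
  induction h : v.1 + v.2 using Nat.strong_induction_on generalizing v with
  | _ n ih =>
  rcases lt_or_ge v.2 v.1 with hv | hv
  · simp [catalanPaths_eq_empty hv]
  rcases eq_or_ne v 0 with rfl | h0
  · simp [catalanPaths_zero hS]
  rw [catalanPaths_eq_biUnion hv h0]
  refine ((Set.finite_Iic v).inter_of_right S).biUnion fun st ⟨hst, hle⟩ =>
    (ih _ ?_ _ rfl).image _
  have hst0 : st ≠ (0, 0) := by rintro rfl; exact hS hst
  simp only [Set.mem_Iic, Prod.le_def, ne_eq, Prod.ext_iff, not_and_or] at hle hst0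
  simp only [Prod.fst_sub, Prod.snd_sub]
  omega

lemma ncard_catalanPaths (hS : (0, 0) ∉ S) (hv : v.1 ≤ v.2) (h0 : v ≠ 0) :
    (catalanPaths S v).ncard = ∑ᶠ st ∈ S ∩ Set.Iic v, (catalanPaths S (v - st)).ncard := by
  rw [catalanPaths_eq_biUnion hv h0, ((Set.finite_Iic v).inter_of_right S).ncard_biUnion
    (fun st _ => (finite_catalanPaths hS _).image _)]
  · exact finsum_mem_congr rfl fun st _ =>
      Set.ncard_image_of_injective _ (List.append_left_injective _)
  · rintro st _ st' _ hne
    simp only [Function.onFun, Set.disjoint_left, Set.mem_image]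
    rintro _ ⟨q, -, rfl⟩ ⟨q', -, h⟩
    exact hne (List.append_singleton_inj.mp h).2.symm

end Paths

lemma queenSteps_inter_Iic (x y : ℕ) :
    queenSteps ∩ Set.Iic (x, y) =
      ↑(((range x).image (fun a => (a + 1, 0)) ∪ (range y).image (fun a => (0, a + 1))) ∪
        (range (min x y)).image (fun a => (a + 1, a + 1))) := by
  ext ⟨i, j⟩
  simp only [queenSteps, Set.mem_inter_iff, Set.mem_ofPred_eq, Set.mem_Iic, Prod.mk_le_mk,
    coe_union, coe_image, coe_range, Set.mem_union, Set.mem_image, Set.mem_Iio, Prod.ext_iff]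
  constructor
  · rintro ⟨⟨a, ha, h1, h2⟩ | ⟨a, ha, h1, h2⟩ | ⟨a, ha, h1, h2⟩, hi, hj⟩
    · exact .inl (.inl ⟨a - 1, by omega, by omega, by omega⟩)
    · exact .inl (.inr ⟨a - 1, by omega, by omega, by omega⟩)
    · exact .inr ⟨a - 1, by omega, by omega, by omega⟩
  · rintro ((⟨a, ha, h1, h2⟩ | ⟨a, ha, h1, h2⟩) | ⟨a, ha, h1, h2⟩)
    · exact ⟨.inl ⟨a + 1, by omega, by omega, by omega⟩, by omega, by omega⟩
    · exact ⟨.inr (.inl ⟨a + 1, by omega, by omega, by omega⟩), by omega, by omega⟩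
    · exact ⟨.inr (.inr ⟨a + 1, by omega, by omega, by omega⟩), by omega, by omega⟩

lemma finsum_mem_queenSteps_inter_Iic {M : Type*} [AddCommMonoid M] (f : ℕ × ℕ → M)
    (x y : ℕ) :
    ∑ᶠ st ∈ queenSteps ∩ Set.Iic (x, y), f st =
      ∑ a ∈ range x, f (a + 1, 0) + ∑ a ∈ range y, f (0, a + 1) +
        ∑ a ∈ range (min x y), f (a + 1, a + 1) := by
  rw [queenSteps_inter_Iic, finsum_mem_coe_finset, sum_union, sum_union, sum_image, sum_image,
    sum_image]
  all_goals
    first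
    | intro a _ b _ h; simp only [Prod.ext_iff] at h; omega
    | simp only [disjoint_left, mem_union, mem_image, mem_range]
      rintro _ h ⟨b, -, rfl⟩
      simp at h

lemma zero_notMem_queenSteps : (0, 0) ∉ queenSteps := by
  rintro (⟨a, ha, h⟩ | ⟨a, ha, h⟩ | ⟨a, ha, h⟩) <;>
    simp only [Prod.ext_iff] at h <;> omega

noncomputable def queenCount (x k : ℕ) : ℕ := (catalanPaths queenSteps (x, x + k)).ncard

lemma queenCount_eq (x k : ℕ) :
    queenCount x k = (if x = 0 ∧ k = 0 then 1 else 0) +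
      ∑ a ∈ range x, queenCount (x - 1 - a) (k + 1 + a) + ∑ j ∈ range k, queenCount x j +
        ∑ a ∈ range x, queenCount (x - 1 - a) k := by
  by_cases h0 : x = 0 ∧ k = 0
  · obtain ⟨rfl, rfl⟩ := h0
    exact (congrArg Set.ncard (catalanPaths_zero zero_notMem_queenSteps)).trans
      (Set.ncard_singleton _)
  unfold queenCount
  have hhor : ∑ a ∈ range x, (catalanPaths queenSteps ((x, x + k) - (a + 1, 0))).ncard =
      ∑ a ∈ range x, (catalanPaths queenSteps (x - 1 - a, x - 1 - a + (k + 1 + a))).ncard :=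
    sum_congr rfl fun a ha => by
      rw [mem_range] at ha
      congr 2; ext <;> simp only [Prod.mk_sub_mk] <;> omega
  have hvert : ∑ a ∈ range (x + k), (catalanPaths queenSteps ((x, x + k) - (0, a + 1))).ncard =
      ∑ j ∈ range k, (catalanPaths queenSteps (x, x + j)).ncard := by
    have hbelow : ∀ a ∈ range x,
        (catalanPaths queenSteps ((x, x + k) - (0, k + a + 1))).ncard = 0 := fun a ha => by
      rw [mem_range] at ha
      rw [catalanPaths_eq_empty (by simp only [Prod.mk_sub_mk, tsub_zero]; omega), Set.ncard_empty]
    rw [show range (x + k) = range (k + x) by rw [Nat.add_comm], sum_range_add,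
      sum_eq_zero hbelow, add_zero,
      ← sum_range_reflect (fun j => (catalanPaths queenSteps (x, x + j)).ncard) k]
    refine sum_congr rfl fun a ha => ?_
    rw [mem_range] at ha
    congr 2; ext <;> simp only [Prod.mk_sub_mk, tsub_zero]; omega
  have hdiag : ∑ a ∈ range x, (catalanPaths queenSteps ((x, x + k) - (a + 1, a + 1))).ncard =
      ∑ a ∈ range x, (catalanPaths queenSteps (x - 1 - a, x - 1 - a + k)).ncard :=
    sum_congr rfl fun a ha => by
      rw [mem_range] at ha
      congr 2; ext <;> simp only [Prod.mk_sub_mk] <;> omega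
  rw [if_neg h0, zero_add, ncard_catalanPaths zero_notMem_queenSteps (by simp)
    (by simp [Prod.ext_iff]; omega), finsum_mem_queenSteps_inter_Iic, min_eq_left (by omega),
    hhor, hvert, hdiag]

namespace PowerSeries

open scoped WithPiTopology

variable {R : Type*} [CommRing R] {A B : ℕ → R⟦X⟧} {u : R⟦X⟧}

lemma coeff_mul_pow_eq_zero (C : R⟦X⟧) (hu : constantCoeff u = 0) {n k : ℕ} (h : n < k) :
    coeff n (C * u ^ k) = 0 :=
  X_pow_dvd_iff.mp (dvd_mul_of_dvd_right (pow_dvd_pow_of_dvd (X_dvd_iff.mpr hu) k) C) n h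

variable [TopologicalSpace R]

/-- The bivariate series `∑ₖ A k yᵏ` evaluated at `y = u`; for `u` without constant term
the sum converges coefficientwise. -/
noncomputable def evalSeq (A : ℕ → R⟦X⟧) (u : R⟦X⟧) : R⟦X⟧ := ∑' k, A k * u ^ k

lemma summable_mul_pow (A : ℕ → R⟦X⟧) (hu : constantCoeff u = 0) :
    Summable fun k => A k * u ^ k := by
  refine (WithPiTopology.summable_iff_summable_coeff R).mpr fun n =>
    summable_of_hasFiniteSupport ((Set.finite_Iic n).subset fun k hk => ?_)
  by_contra h
  exact hk (coeff_mul_pow_eq_zero _ hu (not_le.mp h))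

lemma evalSeq_ite_zero (u : R⟦X⟧) : evalSeq (fun k => if k = 0 then 1 else 0) u = 1 := by
  simp [evalSeq]

variable [T2Space R]

lemma coeff_evalSeq_X (A : ℕ → R⟦X⟧) (n : ℕ) :
    coeff n (evalSeq A X) = ∑ k ∈ range (n + 1), coeff (n - k) (A k) := by
  have hsum : HasSum (fun k => coeff n (A k * X ^ k)) (coeff n (evalSeq A X)) :=
    (WithPiTopology.hasSum_iff_hasSum_coeff R).mp (summable_mul_pow A constantCoeff_X).hasSum n
  rw [hsum.unique (hasSum_sum_of_ne_finset_zero (s := range (n + 1)) fun k hk =>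
    coeff_mul_pow_eq_zero _ constantCoeff_X (by rw [mem_range] at hk; omega))]
  exact sum_congr rfl fun k hk => by
    rw [coeff_mul_X_pow', if_pos (Nat.lt_succ_iff.mp (mem_range.mp hk))]

lemma coeff_X_mul_evalSeq_X (A : ℕ → R⟦X⟧) (n : ℕ) :
    coeff n (X * evalSeq A X) = ∑ k ∈ range n, coeff (n - 1 - k) (A k) := by
  cases n with
  | zero => simp
  | succ n => simp [coeff_succ_X_mul, coeff_evalSeq_X]

variable [IsTopologicalRing R]

lemma evalSeq_add (hu : constantCoeff u = 0) :
    evalSeq (fun k => A k + B k) u = evalSeq A u + evalSeq B u := by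
  simp only [evalSeq, add_mul]
  exact (summable_mul_pow A hu).tsum_add (summable_mul_pow B hu)

lemma evalSeq_mul_left (c : R⟦X⟧) (hu : constantCoeff u = 0) :
    evalSeq (fun k => c * A k) u = c * evalSeq A u := by
  simp only [evalSeq, mul_assoc]
  exact (summable_mul_pow A hu).tsum_mul_left c

lemma evalSeq_eq_add_mul (hu : constantCoeff u = 0) :
    evalSeq A u = A 0 + u * evalSeq (fun k => A (k + 1)) u := by
  rw [evalSeq, (summable_mul_pow A hu).tsum_eq_zero_add, evalSeq,
    ← (summable_mul_pow _ hu).tsum_mul_left]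
  simp only [pow_zero, mul_one, pow_succ]
  congr 1
  exact tsum_congr fun k => by ring

lemma constantCoeff_evalSeq (hu : constantCoeff u = 0) :
    constantCoeff (evalSeq A u) = constantCoeff (A 0) := by
  rw [evalSeq_eq_add_mul hu, map_add, map_mul, hu, zero_mul, add_zero]

lemma one_sub_mul_evalSeq_const (C : R⟦X⟧) (hu : constantCoeff u = 0) :
    (1 - u) * evalSeq (fun _ => C) u = C := by
  linear_combination evalSeq_eq_add_mul (A := fun _ => C) hu

end PowerSeries

open PowerSeries

noncomputable def queenSeries (k : ℕ) : ℚ⟦X⟧ := mk fun x => (queenCount x k : ℚ)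

/- The generating functions of the Catalan queen paths to `(x, x + k)` whose last step is
horizontal, vertical or diagonal; the `a`-th term of `horizontalSeries` (of `diagonalSeries`)
comes from the last step `(a + 1, 0)` (the last step `(a + 1, a + 1)`). -/
noncomputable def horizontalSeries (k : ℕ) : ℚ⟦X⟧ :=
  X * evalSeq (fun a => queenSeries (k + 1 + a)) X

noncomputable def verticalSeries (k : ℕ) : ℚ⟦X⟧ := ∑ j ∈ range k, queenSeries j

noncomputable def diagonalSeries (k : ℕ) : ℚ⟦X⟧ := X * evalSeq (fun _ => queenSeries k) X

lemma queenSeries_eq (k : ℕ) :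
    queenSeries k = (if k = 0 then 1 else 0) + horizontalSeries k + verticalSeries k +
      diagonalSeries k := by
  ext x
  have hδ : coeff x (if k = 0 then 1 else 0 : ℚ⟦X⟧) = if x = 0 ∧ k = 0 then 1 else 0 := by
    split_ifs <;> simp_all [coeff_one]
  rw [queenSeries, coeff_mk, queenCount_eq]
  simp only [map_add, hδ, horizontalSeries, verticalSeries, diagonalSeries, coeff_X_mul_evalSeq_X,
    map_sum, queenSeries, coeff_mk]
  push_cast
  rfl

lemma constantCoeff_queenSeries_zero : constantCoeff (queenSeries 0) = 1 := by
  rw [queenSeries, ← coeff_zero_eq_constantCoeff_apply, coeff_mk, queenCount_eq]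
  simp

lemma evalSeq_queenSeries_X : evalSeq queenSeries X = queenSeries 0 + horizontalSeries 0 := by
  have hshift : (fun a => queenSeries (0 + 1 + a)) = fun a => queenSeries (a + 1) :=
    funext fun a => by rw [zero_add, Nat.add_comm]
  rw [evalSeq_eq_add_mul constantCoeff_X, horizontalSeries, hshift]

lemma two_sub_three_X_mul_queenSeries_zero :
    (2 - 3 * X) * queenSeries 0 = (1 - X) * (1 + evalSeq queenSeries X) := by
  have hdiag : (1 - X) * diagonalSeries 0 = X * queenSeries 0 := by
    rw [diagonalSeries, mul_left_comm, one_sub_mul_evalSeq_const _ constantCoeff_X]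
  have h := queenSeries_eq 0
  rw [if_pos rfl, show verticalSeries 0 = 0 from sum_range_zero _, add_zero] at h
  linear_combination (1 - X) * h + hdiag - (1 - X) * evalSeq_queenSeries_X

def queenKernel {R : Type*} [CommRing R] (t u : R) : R :=
  (1 - t) * (1 - u) * (u - t) - t * (1 - t) * (1 - u) - u * (1 - t) * (u - t) -
    t * (1 - u) * (u - t)

section GeneratingFunction

variable {u : ℚ⟦X⟧}

lemma evalSeq_queenSeries_eq (hu : constantCoeff u = 0) :
    evalSeq queenSeries u = 1 + evalSeq horizontalSeries u + evalSeq verticalSeries u +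
      evalSeq diagonalSeries u := by
  conv_lhs => rw [show queenSeries = _ from funext queenSeries_eq]
  rw [evalSeq_add hu, evalSeq_add hu, evalSeq_add hu, evalSeq_ite_zero]

lemma sub_X_mul_evalSeq_horizontalSeries (hu : constantCoeff u = 0) :
    (u - X) * evalSeq horizontalSeries u =
      X * (evalSeq queenSeries u - evalSeq queenSeries X) := by
  have hstep : horizontalSeries =
      fun k => X * queenSeries (k + 1) + X * horizontalSeries (k + 1) := by
    funext k
    have hshift : (fun a => queenSeries (k + 1 + (a + 1))) =
        fun a => queenSeries (k + 1 + 1 + a) :=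
      funext fun a => by rw [← add_assoc, Nat.add_right_comm]
    rw [horizontalSeries, evalSeq_eq_add_mul constantCoeff_X, horizontalSeries, hshift,
      add_zero]
    ring
  have hrec : evalSeq horizontalSeries u = X * evalSeq (fun k => queenSeries (k + 1)) u +
      X * evalSeq (fun k => horizontalSeries (k + 1)) u := by
    conv_lhs => rw [hstep]
    rw [evalSeq_add hu, evalSeq_mul_left _ hu, evalSeq_mul_left _ hu]
  linear_combination u * hrec - X * evalSeq_eq_add_mul (A := queenSeries) hu -
    X * evalSeq_eq_add_mul (A := horizontalSeries) hu + X * evalSeq_queenSeries_X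

lemma one_sub_mul_evalSeq_verticalSeries (hu : constantCoeff u = 0) :
    (1 - u) * evalSeq verticalSeries u = u * evalSeq queenSeries u := by
  have hsucc : (fun k => verticalSeries (k + 1)) = fun k => verticalSeries k + queenSeries k :=
    funext fun k => sum_range_succ _ _
  have h := evalSeq_eq_add_mul (A := verticalSeries) hu
  rw [hsucc, evalSeq_add hu, show verticalSeries 0 = 0 from sum_range_zero _, zero_add] at h
  linear_combination h

lemma one_sub_X_mul_evalSeq_diagonalSeries (hu : constantCoeff u = 0) :
    (1 - X) * evalSeq diagonalSeries u = X * evalSeq queenSeries u := by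
  rw [← evalSeq_mul_left _ hu, ← evalSeq_mul_left _ hu]
  congr 1
  funext k
  rw [diagonalSeries, mul_left_comm, one_sub_mul_evalSeq_const _ constantCoeff_X]

lemma queenKernel_mul_evalSeq_queenSeries (hu : constantCoeff u = 0) :
    queenKernel X u * evalSeq queenSeries u =
      (1 - X) * (1 - u) * (u - X * (1 + evalSeq queenSeries X)) := by
  rw [queenKernel]
  linear_combination (1 - X) * (1 - u) * (u - X) * evalSeq_queenSeries_eq hu +
    (1 - X) * (1 - u) * sub_X_mul_evalSeq_horizontalSeries hu +
    (1 - X) * (u - X) * one_sub_mul_evalSeq_verticalSeries hu +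
    (1 - u) * (u - X) * one_sub_X_mul_evalSeq_diagonalSeries hu

end GeneratingFunction

theorem stmt6 (P : PowerSeries ℚ)
    (hP : P = PowerSeries.mk fun n => (pCatalan queenSteps n : ℚ)) :
    PowerSeries.X * (2 - 3 * PowerSeries.X) ^ 2 * P ^ 2 -
      (4 * PowerSeries.X ^ 3 - 5 * PowerSeries.X ^ 2 + 1) * P +
      (1 - PowerSeries.X) ^ 2 = 0 := by
  set G := evalSeq queenSeries X
  set u : ℚ⟦X⟧ := X * (1 + G) with hu_def
  have hu : constantCoeff u = 0 := by simp [u]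
  have hΦ : evalSeq queenSeries u ≠ 0 := fun h => by
    simpa [h, constantCoeff_queenSeries_zero] using constantCoeff_evalSeq (A := queenSeries) hu
  have hK : queenKernel X u = 0 := by
    have h := queenKernel_mul_evalSeq_queenSeries hu
    rw [← hu_def, sub_self, mul_zero] at h
    exact (mul_eq_zero.mp h).resolve_right hΦ
  have hG : (1 - X) * (1 - 2 * X) * G - (1 - X) ^ 2 - X * (2 - 3 * X) * G ^ 2 = 0 := by
    have h : X * ((1 - X) * (1 - 2 * X) * G - (1 - X) ^ 2 - X * (2 - 3 * X) * G ^ 2) = 0 := by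
      rw [← hK, queenKernel, hu_def]; ring
    exact (mul_eq_zero.mp h).resolve_left X_ne_zero
  have hPG : (2 - 3 * X) * P = (1 - X) * (1 + G) := hP ▸ two_sub_three_X_mul_queenSeries_zero
  have h23 : (2 - 3 * X : ℚ⟦X⟧) ≠ 0 := fun h => by
    have h0 := congrArg constantCoeff h
    norm_num [map_ofNat] at h0
  refine (mul_eq_zero.mp ?_).resolve_left h23
  -- `(1 - X)² · hG` is a quadratic in `(1 - X) G`; replacing `(1 - X) G` by
  -- `(2 - 3X) P - (1 - X)` (that is, `hPG`) turns it into `-(2 - 3X)` times the goal.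
  linear_combination (-(1 - X) ^ 2) * hG -
    ((1 - X) ^ 2 * (1 - 2 * X) -
      X * (2 - 3 * X) * ((1 - X) * G + (2 - 3 * X) * P - (1 - X))) * hPG
end
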